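/- arXiv:0808.2479 — 7 statements merged into one kernel-verified Lean document; each statement's English description precedes it below -/
import Mathlib

section
/- Let U and Y be complex Hilbert spaces, F a closed subspace of U, and ω = (ω₁, ω₂) : F → Y ⊕ U a contraction. Define H_n : U → Y by H_n u = ω₁ (Π_F ω₂)ⁿ Π_F u for n ≥ 0. Then (H_n)_{n≥0} is a solution of the H² interpolation problem defined by ω; in particular, the map Γ_{H_c} : U → ℓ²(ℕ, Y), u ↦ (ω₁ (Π_F ω₂)ⁿ Π_F u)_{n≥0}, is well defined and a contraction, H₀ f = ω₁ f for all f ∈ F, and H_{n+1} f = H_n (ω₂ f) for all f ∈ F and all n ≥ 0. (This is the central solution, corresponding to the function H_c(λ) = ω₁ Π_F (I − λ ω₂ Π_F)^{-1}.) -/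
/-!
With `T = Π_F ω₂ : F → F`, the contraction property gives `‖ω₁ f‖² + ‖T f‖² ≤ ‖f‖²`: each step
of the orbit `Tⁿ f` hands the energy `‖ω₁ Tⁿ f‖²` to the output and keeps at most the rest.
Telescoping, `∑ₙ ‖ω₁ Tⁿ Π_F u‖² ≤ ‖Π_F u‖² ≤ ‖u‖²`, so `Γ` is a contraction into `ℓ²`. The
interpolation conditions hold because `Π_F f = f` on `F`, whence `T (Π_F f) = Π_F (ω₂ f)`.
-/

open scoped ENNReal

/-- A solution of the `H²` interpolation problem defined by the contraction
`ω = (ω₁, ω₂) : F → Y ⊕ U`, identified with its sequence of Taylor coefficients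
`Hn : ℕ → (U →L[ℂ] Y)`. -/
def IsH2Solution {U Y : Type*}
    [NormedAddCommGroup U] [InnerProductSpace ℂ U] [CompleteSpace U]
    [NormedAddCommGroup Y] [InnerProductSpace ℂ Y] [CompleteSpace Y]
    (F : Submodule ℂ U) (ω₁ : F →L[ℂ] Y) (ω₂ : F →L[ℂ] U)
    (Hn : ℕ → (U →L[ℂ] Y)) : Prop :=
  (∃ Γ : U →L[ℂ] lp (fun _ : ℕ => Y) 2, ‖Γ‖ ≤ 1 ∧ ∀ (u : U) (n : ℕ), Γ u n = Hn n u) ∧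
  (∀ f : F, Hn 0 f = ω₁ f) ∧
  (∀ (f : F) (n : ℕ), Hn (n + 1) f = Hn n (ω₂ f))

section OrbitEnergy

variable {R E Y : Type*} [Semiring R] [SeminormedAddCommGroup E] [Module R E]
  [SeminormedAddCommGroup Y] (A : E → Y) (T : E →L[R] E)

theorem sum_range_sq_norm_orbit_add_sq_norm_pow_le
    (hAT : ∀ x, ‖A x‖ ^ 2 + ‖T x‖ ^ 2 ≤ ‖x‖ ^ 2) (x : E) (N : ℕ) :
    ∑ n ∈ Finset.range N, ‖A ((T ^ n) x)‖ ^ 2 + ‖(T ^ N) x‖ ^ 2 ≤ ‖x‖ ^ 2 := by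
  induction N with
  | zero => simp
  | succ N ih =>
    have hstep := hAT ((T ^ N) x)
    rw [Finset.sum_range_succ, pow_succ' T N, mul_apply_eq_comp]
    linarith

theorem sum_sq_norm_orbit_le (hAT : ∀ x, ‖A x‖ ^ 2 + ‖T x‖ ^ 2 ≤ ‖x‖ ^ 2) (x : E)
    (s : Finset ℕ) : ∑ n ∈ s, ‖A ((T ^ n) x)‖ ^ 2 ≤ ‖x‖ ^ 2 := by
  obtain ⟨N, hsN⟩ := s.exists_nat_subset_range
  calc ∑ n ∈ s, ‖A ((T ^ n) x)‖ ^ 2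
      ≤ ∑ n ∈ Finset.range N, ‖A ((T ^ n) x)‖ ^ 2 :=
        Finset.sum_le_sum_of_subset_of_nonneg hsN fun _ _ _ => by positivity
    _ ≤ ‖x‖ ^ 2 := (le_add_of_nonneg_right (sq_nonneg _)).trans
        (sum_range_sq_norm_orbit_add_sq_norm_pow_le A T hAT x N)

end OrbitEnergy

theorem exists_toLp_two_of_sum_sq_le {𝕜 E Y : Type*} [NontriviallyNormedField 𝕜]
    [SeminormedAddCommGroup E] [NormedSpace 𝕜 E] [NormedAddCommGroup Y] [NormedSpace 𝕜 Y]
    (H : ℕ → E →L[𝕜] Y) {C : ℝ} (hC : 0 ≤ C)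
    (hH : ∀ (u : E) (s : Finset ℕ), ∑ n ∈ s, ‖H n u‖ ^ 2 ≤ (C * ‖u‖) ^ 2) :
    ∃ Γ : E →L[𝕜] lp (fun _ : ℕ => Y) 2, ‖Γ‖ ≤ C ∧ ∀ u n, Γ u n = H n u := by
  have hp : (2 : ℝ≥0∞).toReal = 2 := by norm_num
  have hmem (u : E) : Memℓp (fun n => H n u) 2 :=
    memℓp_gen' (C := (C * ‖u‖) ^ 2) fun s => by simpa [hp] using hH u s
  let L : E →ₗ[𝕜] lp (fun _ : ℕ => Y) 2 :=
    { toFun := fun u => ⟨fun n => H n u, hmem u⟩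
      map_add' := fun u v => lp.ext <| funext fun n => (H n).map_add u v
      map_smul' := fun c u => lp.ext <| funext fun n => (H n).map_smul c u }
  have hL (u : E) : ‖L u‖ ≤ C * ‖u‖ :=
    lp.norm_le_of_forall_sum_le (by norm_num) (by positivity) fun s => by
      simpa [hp, L] using hH u s
  exact ⟨L.mkContinuous C hL, L.mkContinuous_norm_le hC hL, fun _ _ => rfl⟩

/-- the central solution `H_n = ω₁ (Π_F ω₂)ⁿ Π_F` is a solution of the `H²`
interpolation problem defined by `ω = (ω₁, ω₂)`. -/
theorem stmt_2
    {U Y : Type*}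
    [NormedAddCommGroup U] [InnerProductSpace ℂ U] [CompleteSpace U]
    [NormedAddCommGroup Y] [InnerProductSpace ℂ Y] [CompleteSpace Y]
    (F : Submodule ℂ U) [CompleteSpace F]
    (ω₁ : F →L[ℂ] Y) (ω₂ : F →L[ℂ] U)
    (hcontr : ∀ f : F, ‖ω₁ f‖ ^ 2 + ‖ω₂ f‖ ^ 2 ≤ ‖f‖ ^ 2) :
    IsH2Solution F ω₁ ω₂ (fun n =>
      (ω₁.comp (((F.orthogonalProjection).comp ω₂) ^ n)).comp (F.orthogonalProjection)) := by
  change IsH2Solution F ω₁ ω₂ fun n =>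
    (ω₁.comp ((F.orthogonalProjectionOnto.comp ω₂) ^ n)).comp F.orthogonalProjectionOnto
  set P := F.orthogonalProjectionOnto
  set T := P.comp ω₂
  have hP (u : U) : ‖P u‖ ≤ ‖u‖ := F.norm_orthogonalProjectionOnto_apply_le u
  have hPF (f : F) : P f = f := F.orthogonalProjectionOnto_mem_subspace_eq_self f
  have hstep (f : F) : ‖ω₁ f‖ ^ 2 + ‖T f‖ ^ 2 ≤ ‖f‖ ^ 2 := by
    have hT : ‖T f‖ ≤ ‖ω₂ f‖ := hP (ω₂ f)
    nlinarith [hcontr f, norm_nonneg (T f)]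
  refine ⟨exists_toLp_two_of_sum_sq_le _ zero_le_one fun u s => ?_, fun f => ?_, fun f n => ?_⟩
  · simp only [ContinuousLinearMap.comp_apply, one_mul]
    exact (sum_sq_norm_orbit_le ω₁ T hstep (P u) s).trans
      (pow_le_pow_left₀ (norm_nonneg _) (hP u) 2)
  · simp [hPF]
  · simp only [ContinuousLinearMap.comp_apply, pow_succ, mul_apply_eq_comp, hPF]
    rfl
end

section
/- Let U and Y be complex Hilbert spaces, F a closed subspace of U, and ω = (ω₁, ω₂) : F → Y ⊕ U a contraction. Let Γ_{H_c} : U → ℓ²(ℕ, Y) be the contraction defined by Γ_{H_c} u = (ω₁ (Π_F ω₂)ⁿ Π_F u)_{n≥0} (the operator associated with the central solution). Then Γ_{H_c} is a co-isometry if and only if for every integer n ≥ 0 the operator ω₁ (Π_F ω₂)ⁿ : F → Y is a co-isometry. -/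
/-!
Write `S i = ω₁ (Π_F ω₂)ⁱ Π_F : U → Y` for the rows of `Γ`. Testing against coordinate vectors
`eᵢ y` of `ℓ²` gives `Γ* (eᵢ y) = S i* y`, so `Γ Γ* = 1` forces `S i S i* = 1`. Conversely, if
every `S i S i*` is the identity, then the contraction `Γ*` preserves the norm of each `eᵢ y`; for
a contraction `A`, `‖A x‖ = ‖x‖` already implies `A* A x = x`, because
`‖A* A x - x‖² = ‖A* A x‖² - ‖x‖² ≤ 0`. Hence `Γ Γ*` fixes the `eᵢ y`, whose span is dense.
Finally `S i S i* = T i T i*` for `T i = ω₁ (Π_F ω₂)ⁱ`, since `Π_F* : F → U` is the inclusion.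
-/

open ContinuousLinearMap
open scoped ENNReal InnerProductSpace
namespace ContinuousLinearMap

variable {𝕜 H K : Type*} [RCLike 𝕜]
  [NormedAddCommGroup H] [InnerProductSpace 𝕜 H] [CompleteSpace H]
  [NormedAddCommGroup K] [InnerProductSpace 𝕜 K] [CompleteSpace K]

theorem adjoint_apply_apply_eq_of_norm_map_eq {A : H →L[𝕜] K} (hA : ‖A‖ ≤ 1) {x : H}
    (hx : ‖A x‖ = ‖x‖) : A.adjoint (A x) = x := by
  have hle : ‖A.adjoint (A x)‖ ≤ ‖x‖ :=
    calc ‖A.adjoint (A x)‖ ≤ ‖A.adjoint‖ * ‖A x‖ := A.adjoint.le_opNorm _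
      _ ≤ 1 * ‖x‖ := by rw [LinearIsometryEquiv.norm_map, hx]; gcongr
      _ = ‖x‖ := one_mul _
  have hre : RCLike.re ⟪A.adjoint (A x), x⟫_𝕜 = ‖x‖ ^ 2 := by
    rw [adjoint_inner_left, inner_self_eq_norm_sq, hx]
  have hsq : ‖A.adjoint (A x) - x‖ ^ 2 ≤ 0 := by
    rw [norm_sub_sq (𝕜 := 𝕜), hre]
    nlinarith [norm_nonneg (A.adjoint (A x))]
  rw [← sub_eq_zero, ← norm_eq_zero]
  nlinarith [norm_nonneg (A.adjoint (A x) - x)]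

end ContinuousLinearMap

theorem lp.continuousLinearMap_ext {𝕜 ι V : Type*} {E : ι → Type*} [NormedField 𝕜]
    [DecidableEq ι] [∀ i, NormedAddCommGroup (E i)] [∀ i, NormedSpace 𝕜 (E i)]
    [NormedAddCommGroup V] [NormedSpace 𝕜 V] {p : ℝ≥0∞} [Fact (1 ≤ p)] (hp : p ≠ ⊤)
    {B C : lp E p →L[𝕜] V} (h : ∀ i (x : E i), B (lp.single p i x) = C (lp.single p i x)) :
    B = C := by
  ext f
  have hf := lp.hasSum_single hp f
  exact (B.hasSum hf).unique (by simpa only [h] using C.hasSum hf)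

namespace ContinuousLinearMap

variable {𝕜 ι U Y : Type*} [RCLike 𝕜] [DecidableEq ι]
  [NormedAddCommGroup U] [InnerProductSpace 𝕜 U] [CompleteSpace U]
  [NormedAddCommGroup Y] [InnerProductSpace 𝕜 Y] [CompleteSpace Y]
  {Γ : U →L[𝕜] lp (fun _ : ι => Y) 2} {S : ι → U →L[𝕜] Y}

theorem adjoint_apply_lp_single (hΓ : ∀ u i, Γ u i = S i u) (i : ι) (y : Y) :
    Γ.adjoint (lp.single 2 i y) = (S i).adjoint y := by
  refine ext_inner_right 𝕜 fun u => ?_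
  rw [adjoint_inner_left, lp.inner_single_left, hΓ, adjoint_inner_left]

theorem comp_adjoint_eq_one_iff_forall_coord (hΓ : ∀ u i, Γ u i = S i u) (hΓnorm : ‖Γ‖ ≤ 1) :
    Γ.comp Γ.adjoint = 1 ↔ ∀ i, (S i).comp (S i).adjoint = 1 := by
  constructor
  · intro h i
    ext y
    calc S i ((S i).adjoint y) = Γ (Γ.adjoint (lp.single 2 i y)) i := by
          rw [adjoint_apply_lp_single hΓ, hΓ]
      _ = y := by rw [← comp_apply, h, one_apply_eq_self, lp.single_apply_self]
  · intro h
    refine lp.continuousLinearMap_ext ENNReal.ofNat_ne_top fun i y => ?_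
    have hnorm : ‖Γ.adjoint (lp.single 2 i y)‖ = ‖lp.single (E := fun _ : ι => Y) 2 i y‖ := by
      rw [adjoint_apply_lp_single hΓ, lp.norm_single (by norm_num),
        (norm_map_iff_adjoint_comp_self _).mpr (by rw [adjoint_adjoint, h])]
    have hΓadj : ‖Γ.adjoint‖ ≤ 1 := by rwa [LinearIsometryEquiv.norm_map]
    simpa only [adjoint_adjoint, comp_apply, one_apply_eq_self] using
      adjoint_apply_apply_eq_of_norm_map_eq hΓadj hnorm

end ContinuousLinearMap

theorem Submodule.comp_orthogonalProjectionOnto_comp_adjoint {𝕜 U Y : Type*} [RCLike 𝕜]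
    [NormedAddCommGroup U] [InnerProductSpace 𝕜 U] [CompleteSpace U]
    [NormedAddCommGroup Y] [InnerProductSpace 𝕜 Y] [CompleteSpace Y]
    (F : Submodule 𝕜 U) [CompleteSpace F] (T : F →L[𝕜] Y) :
    (T.comp F.orthogonalProjectionOnto).comp (T.comp F.orthogonalProjectionOnto).adjoint =
      T.comp T.adjoint := by
  ext y
  simp [adjoint_comp, F.adjoint_orthogonalProjectionOnto]

theorem stmt_3_general
    {U Y : Type*}
    [NormedAddCommGroup U] [InnerProductSpace ℂ U] [CompleteSpace U]
    [NormedAddCommGroup Y] [InnerProductSpace ℂ Y] [CompleteSpace Y]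
    (F : Submodule ℂ U) [CompleteSpace F]
    (ω₁ : F →L[ℂ] Y) (ω₂ : F →L[ℂ] U)
    (Γ : U →L[ℂ] lp (fun _ : ℕ => Y) 2) (hΓnorm : ‖Γ‖ ≤ 1)
    (hΓ : ∀ (u : U) (n : ℕ),
      Γ u n = ω₁ ((((F.orthogonalProjectionOnto).comp ω₂) ^ n) (F.orthogonalProjectionOnto u))) :
    Γ.comp Γ.adjoint = 1 ↔
      ∀ n : ℕ,
        (ω₁.comp (((F.orthogonalProjectionOnto).comp ω₂) ^ n)).comp
          (ω₁.comp (((F.orthogonalProjectionOnto).comp ω₂) ^ n)).adjoint = 1 := by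
  simpa only [F.comp_orthogonalProjectionOnto_comp_adjoint] using
    comp_adjoint_eq_one_iff_forall_coord (S := fun n =>
      (ω₁.comp (((F.orthogonalProjectionOnto).comp ω₂) ^ n)).comp F.orthogonalProjectionOnto)
      hΓ hΓnorm

/-- the operator `Γ_{H_c} : U → ℓ²(ℕ, Y)` associated with the central solution,
`Γ_{H_c} u = (ω₁ (Π_F ω₂)ⁿ Π_F u)ₙ`, is a co-isometry iff every operator `ω₁ (Π_F ω₂)ⁿ` is a
co-isometry. -/
theorem stmt_3
    {U Y : Type*}
    [NormedAddCommGroup U] [InnerProductSpace ℂ U] [CompleteSpace U]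
    [NormedAddCommGroup Y] [InnerProductSpace ℂ Y] [CompleteSpace Y]
    (F : Submodule ℂ U) [CompleteSpace F]
    (ω₁ : F →L[ℂ] Y) (ω₂ : F →L[ℂ] U)
    (hcontr : ∀ f : F, ‖ω₁ f‖ ^ 2 + ‖ω₂ f‖ ^ 2 ≤ ‖f‖ ^ 2)
    (Γ : U →L[ℂ] lp (fun _ : ℕ => Y) 2) (hΓnorm : ‖Γ‖ ≤ 1)
    (hΓ : ∀ (u : U) (n : ℕ),
      Γ u n = ω₁ ((((F.orthogonalProjectionOnto).comp ω₂) ^ n) (F.orthogonalProjectionOnto u))) :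
    Γ.comp Γ.adjoint = 1 ↔
      ∀ n : ℕ,
        (ω₁.comp (((F.orthogonalProjectionOnto).comp ω₂) ^ n)).comp
          (ω₁.comp (((F.orthogonalProjectionOnto).comp ω₂) ^ n)).adjoint = 1 :=
  stmt_3_general F ω₁ ω₂ Γ hΓnorm hΓ
end

section
/- Let X, V, W be complex Hilbert spaces and let {A, B, C, D} be a co-isometric system, i.e. A : X → X, B : V → X, C : X → W, D : V → W are bounded operators such that the block operator [[A, B], [C, D]] : X ⊕ V → X ⊕ W is a co-isometry. Then there exists a bounded linear operator T : ℓ²(ℕ, V) ⊕ X → ℓ²(ℕ, W) such that for every finitely supported sequence v = (v_i)_{i≥0} in V and every x ∈ X, the n-th component of T(v, x) equals D v_n + Σ_{i=0}^{n-1} C A^{n-1-i} B v_i + C Aⁿ x, and this operator T is a co-isometry. -/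
/-!
The operator is the input-output map of the discrete-time system
`xₙ₊₁ = A xₙ + B vₙ`, `yₙ = C xₙ + D vₙ`, `x₀ = x`. The colligation `S` is a contraction (its
adjoint is an isometry), so `‖xₙ₊₁‖² + ‖yₙ‖² ≤ ‖xₙ‖² + ‖vₙ‖²`; telescoping bounds `‖y‖²` by
`‖x‖² + ‖v‖²`, so the map is a bounded contraction `T`.

For `T T* = 1` it suffices to test on the impulses `δₖ w`, which span a dense subspace.
`T* (δₖ w)` is the input/initial state produced by running the adjoint system backwards from
`C* w`. Feeding it into `T`, the entries `A A* + B B* = 1`, `A C* + B D* = 0`, `C A* + D B* = 0`,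
`C C* + D D* = 1` of `S S* = 1` make the state retrace `A*^(k-n) C* w`, vanish after time `k`,
and produce the output `δₖ w`.
-/

open scoped InnerProductSpace
open Finset ContinuousLinearMap

noncomputable section

theorem ContinuousLinearMap.norm_apply_le_of_comp_adjoint_eq_one {𝕜 E F : Type*} [RCLike 𝕜]
    [NormedAddCommGroup E] [InnerProductSpace 𝕜 E] [CompleteSpace E]
    [NormedAddCommGroup F] [InnerProductSpace 𝕜 F] [CompleteSpace F]
    (S : E →L[𝕜] F) (h : S ∘L adjoint S = 1) (z : E) : ‖S z‖ ≤ ‖z‖ := by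
  have hiso : ∀ y, ‖adjoint S y‖ = ‖y‖ :=
    (norm_map_iff_adjoint_comp_self (adjoint S)).mpr (by rwa [adjoint_adjoint])
  have hS : ‖S‖ ≤ 1 := by
    rw [← LinearIsometryEquiv.norm_map adjoint S]
    exact opNorm_le_bound _ zero_le_one fun y => by rw [hiso, one_mul]
  simpa using S.le_of_opNorm_le hS z

theorem ContinuousLinearMap.adjoint_pow {𝕜 E : Type*} [RCLike 𝕜] [NormedAddCommGroup E]
    [InnerProductSpace 𝕜 E] [CompleteSpace E] (A : E →L[𝕜] E) (n : ℕ) :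
    adjoint (A ^ n) = adjoint A ^ n := by
  simpa only [star_eq_adjoint] using star_pow A n

namespace LinearSystem

variable {𝕜 X V W : Type*} [RCLike 𝕜]

section Trajectory

variable [NormedAddCommGroup X] [NormedSpace 𝕜 X] [NormedAddCommGroup V] [NormedSpace 𝕜 V]
  [NormedAddCommGroup W] [NormedSpace 𝕜 W]

def state (A : X →L[𝕜] X) (B : V →L[𝕜] X) (x : X) (v : ℕ → V) : ℕ → X
  | 0 => x
  | n + 1 => A (state A B x v n) + B (v n)

def output (A : X →L[𝕜] X) (B : V →L[𝕜] X) (C : X →L[𝕜] W) (D : V →L[𝕜] W) (x : X)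
    (v : ℕ → V) (n : ℕ) : W :=
  C (state A B x v n) + D (v n)

variable (A : X →L[𝕜] X) (B : V →L[𝕜] X) (C : X →L[𝕜] W) (D : V →L[𝕜] W)

theorem state_eq_sum (x : X) (v : ℕ → V) (n : ℕ) :
    state A B x v n = (A ^ n) x + ∑ i ∈ range n, (A ^ (n - 1 - i)) (B (v i)) := by
  induction n with
  | zero => simp [state]
  | succ n ih =>
    have hpow : ∀ i ∈ range n, (A ^ (n - i)) (B (v i)) = A ((A ^ (n - 1 - i)) (B (v i))) :=
      fun i hi => by
        rw [← mul_apply_eq_comp, ← pow_succ', show n - 1 - i + 1 = n - i by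
          have := mem_range.mp hi; omega]
    simp only [state, ih, map_add, map_sum, sum_range_succ, Nat.add_sub_cancel, Nat.sub_self,
      pow_zero, one_apply_eq_self, sum_congr rfl hpow, pow_succ' A n, mul_apply_eq_comp]
    abel

theorem state_add (x x' : X) (v v' : ℕ → V) (n : ℕ) :
    state A B (x + x') (v + v') n = state A B x v n + state A B x' v' n := by
  induction n with
  | zero => rfl
  | succ n ih => simp only [state, ih, map_add, Pi.add_apply]; abel

theorem state_smul (c : 𝕜) (x : X) (v : ℕ → V) (n : ℕ) :
    state A B (c • x) (c • v) n = c • state A B x v n := by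
  induction n with
  | zero => rfl
  | succ n ih => simp only [state, ih, map_smul, Pi.smul_apply, smul_add]

theorem sum_range_norm_output_sq_add_norm_state_sq_le
    (hc : ∀ x v, ‖A x + B v‖ ^ 2 + ‖C x + D v‖ ^ 2 ≤ ‖x‖ ^ 2 + ‖v‖ ^ 2) (x : X) (v : ℕ → V)
    (N : ℕ) :
    ∑ n ∈ range N, ‖output A B C D x v n‖ ^ 2 + ‖state A B x v N‖ ^ 2 ≤
      ‖x‖ ^ 2 + ∑ n ∈ range N, ‖v n‖ ^ 2 := by
  induction N with
  | zero => simp [state]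
  | succ N ih =>
    have := hc (state A B x v N) (v N)
    simp only [sum_range_succ, state, output] at ih this ⊢
    linarith

theorem sum_norm_output_sq_le (hc : ∀ x v, ‖A x + B v‖ ^ 2 + ‖C x + D v‖ ^ 2 ≤ ‖x‖ ^ 2 + ‖v‖ ^ 2)
    (x : X) (v : lp (fun _ : ℕ => V) 2) (s : Finset ℕ) :
    ∑ n ∈ s, ‖output A B C D x v n‖ ^ 2 ≤ ‖x‖ ^ 2 + ‖v‖ ^ 2 := by
  obtain ⟨N, hN⟩ := exists_nat_subset_range s
  have hv := lp.sum_rpow_le_norm_rpow (p := 2) (by norm_num) v (range N)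
  simp only [ENNReal.toReal_ofNat, Real.rpow_two] at hv
  calc ∑ n ∈ s, ‖output A B C D x v n‖ ^ 2
      ≤ ∑ n ∈ range N, ‖output A B C D x v n‖ ^ 2 :=
        sum_le_sum_of_subset_of_nonneg hN fun _ _ _ => by positivity
    _ ≤ ‖x‖ ^ 2 + ∑ n ∈ range N, ‖v n‖ ^ 2 := by
        linarith [sum_range_norm_output_sq_add_norm_state_sq_le A B C D hc x v N,
          sq_nonneg ‖state A B x v N‖]
    _ ≤ ‖x‖ ^ 2 + ‖v‖ ^ 2 := by linarith

theorem memℓp_output (hc : ∀ x v, ‖A x + B v‖ ^ 2 + ‖C x + D v‖ ^ 2 ≤ ‖x‖ ^ 2 + ‖v‖ ^ 2)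
    (x : X) (v : lp (fun _ : ℕ => V) 2) : Memℓp (output A B C D x v) 2 :=
  memℓp_gen' fun s => by
    simpa only [ENNReal.toReal_ofNat, Real.rpow_two] using sum_norm_output_sq_le A B C D hc x v s

def systemOperator (hc : ∀ x v, ‖A x + B v‖ ^ 2 + ‖C x + D v‖ ^ 2 ≤ ‖x‖ ^ 2 + ‖v‖ ^ 2) :
    WithLp 2 (lp (fun _ : ℕ => V) 2 × X) →L[𝕜] lp (fun _ : ℕ => W) 2 :=
  LinearMap.mkContinuous
    { toFun u := ⟨output A B C D u.snd u.fst, memℓp_output A B C D hc u.snd u.fst⟩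
      map_add' u u' := lp.ext <| funext fun n => by
        simp only [output, WithLp.add_fst, WithLp.add_snd, lp.coeFn_add, state_add,
          Pi.add_apply, map_add]
        abel
      map_smul' c u := lp.ext <| funext fun n => by
        simp only [output, WithLp.smul_fst, WithLp.smul_snd, lp.coeFn_smul, state_smul,
          Pi.smul_apply, map_smul, RingHom.id_apply, smul_add] }
    1 fun u => by
      rw [one_mul]
      refine lp.norm_le_of_forall_sum_le (by norm_num) (norm_nonneg u) fun s => ?_
      simpa only [ENNReal.toReal_ofNat, Real.rpow_two, WithLp.prod_norm_sq_eq_of_L2, add_comm,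
        LinearMap.coe_mk, AddHom.coe_mk] using sum_norm_output_sq_le A B C D hc u.snd u.fst s

theorem systemOperator_apply (hc : ∀ x v, ‖A x + B v‖ ^ 2 + ‖C x + D v‖ ^ 2 ≤ ‖x‖ ^ 2 + ‖v‖ ^ 2)
    (u : WithLp 2 (lp (fun _ : ℕ => V) 2 × X)) (n : ℕ) :
    systemOperator A B C D hc u n = output A B C D u.snd u.fst n := rfl

end Trajectory

section Adjoint

variable [NormedAddCommGroup X] [InnerProductSpace 𝕜 X] [CompleteSpace X]
  [NormedAddCommGroup V] [InnerProductSpace 𝕜 V] [CompleteSpace V]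
  [NormedAddCommGroup W] [InnerProductSpace 𝕜 W] [CompleteSpace W]
  (A : X →L[𝕜] X) (B : V →L[𝕜] X) (C : X →L[𝕜] W) (D : V →L[𝕜] W)

theorem inner_state_left (x : X) (v : ℕ → V) (y : X) (m : ℕ) :
    ⟪state A B x v m, y⟫_𝕜 =
      ⟪x, (adjoint A ^ m) y⟫_𝕜 +
        ∑ i ∈ range m, ⟪v i, adjoint B ((adjoint A ^ (m - 1 - i)) y)⟫_𝕜 := by
  simp only [state_eq_sum, inner_add_left, sum_inner, ← adjoint_inner_right, adjoint_pow]

def adjointImpulseInput (k : ℕ) (w : W) (n : ℕ) : V :=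
  if n < k then adjoint B ((adjoint A ^ (k - 1 - n)) (adjoint C w))
  else if n = k then adjoint D w
  else 0

theorem adjointImpulseInput_of_lt {k n : ℕ} (w : W) (h : n < k) :
    adjointImpulseInput A B C D k w n = adjoint B ((adjoint A ^ (k - 1 - n)) (adjoint C w)) :=
  if_pos h

theorem adjointImpulseInput_self (k : ℕ) (w : W) :
    adjointImpulseInput A B C D k w k = adjoint D w := by
  simp [adjointImpulseInput]

theorem adjointImpulseInput_eq_zero {k n : ℕ} (w : W) (h : k < n) :
    adjointImpulseInput A B C D k w n = 0 := by
  simp [adjointImpulseInput, h.not_gt, h.ne']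

theorem memℓp_adjointImpulseInput (k : ℕ) (w : W) :
    Memℓp (adjointImpulseInput A B C D k w) 2 :=
  (memℓp_zero <| (Set.finite_le_nat k).subset fun n hn => by
    by_contra h
    exact hn (adjointImpulseInput_eq_zero A B C D w (not_le.mp h))).of_exponent_ge bot_le

def adjointImpulse (k : ℕ) (w : W) : WithLp 2 (lp (fun _ : ℕ => V) 2 × X) :=
  WithLp.toLp 2 (⟨_, memℓp_adjointImpulseInput A B C D k w⟩, (adjoint A ^ k) (adjoint C w))

theorem coe_adjointImpulse_fst (k : ℕ) (w : W) :
    ⇑(adjointImpulse A B C D k w).fst = adjointImpulseInput A B C D k w :=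
  rfl

theorem adjointImpulse_snd (k : ℕ) (w : W) :
    (adjointImpulse A B C D k w).snd = (adjoint A ^ k) (adjoint C w) :=
  rfl

theorem adjoint_systemOperator_single
    (hc : ∀ x v, ‖A x + B v‖ ^ 2 + ‖C x + D v‖ ^ 2 ≤ ‖x‖ ^ 2 + ‖v‖ ^ 2) (k : ℕ) (w : W) :
    adjoint (systemOperator A B C D hc) (lp.single 2 k w) = adjointImpulse A B C D k w := by
  refine ext_inner_left 𝕜 fun u => ?_
  have hinput : ⟪u.fst, (adjointImpulse A B C D k w).fst⟫_𝕜 =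
      ∑ i ∈ range k, ⟪u.fst i, adjoint B ((adjoint A ^ (k - 1 - i)) (adjoint C w))⟫_𝕜 +
        ⟪u.fst k, adjoint D w⟫_𝕜 := by
    rw [lp.inner_eq_tsum, tsum_eq_sum (s := range (k + 1)) fun n hn => by
      rw [coe_adjointImpulse_fst, adjointImpulseInput_eq_zero A B C D w (by simpa using hn),
        inner_zero_right], sum_range_succ]
    congr 1
    · exact sum_congr rfl fun i hi => by
        rw [coe_adjointImpulse_fst, adjointImpulseInput_of_lt A B C D w (mem_range.mp hi)]
    · rw [coe_adjointImpulse_fst, adjointImpulseInput_self]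
  rw [adjoint_inner_right, lp.inner_single_right, systemOperator_apply, output, inner_add_left,
    ← adjoint_inner_right, ← adjoint_inner_right, inner_state_left, WithLp.prod_inner_apply,
    WithLp.ofLp_fst, WithLp.ofLp_fst, WithLp.ofLp_snd, WithLp.ofLp_snd, hinput, adjointImpulse_snd]
  ring

section Coisometric

variable {A B C D}

theorem adjoint_pow_sub_apply {k n : ℕ} (h : n < k) (y : X) :
    (adjoint A ^ (k - n)) y = adjoint A ((adjoint A ^ (k - 1 - n)) y) := by
  rw [← mul_apply_eq_comp, ← pow_succ', show k - 1 - n + 1 = k - n by omega]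

theorem state_adjointImpulse (hAB : ∀ x, A (adjoint A x) + B (adjoint B x) = x)
    (hAB' : ∀ w, A (adjoint C w) + B (adjoint D w) = 0) (k : ℕ) (w : W) (n : ℕ) :
    state A B ((adjoint A ^ k) (adjoint C w)) (adjointImpulseInput A B C D k w) n =
      if n ≤ k then (adjoint A ^ (k - n)) (adjoint C w) else 0 := by
  induction n with
  | zero => simp only [state, Nat.zero_le, if_true, Nat.sub_zero]
  | succ n ih =>
    rw [state, ih]
    rcases lt_trichotomy n k with h | rfl | h
    · rw [if_pos h.le, if_pos (show n + 1 ≤ k from h), adjointImpulseInput_of_lt A B C D w h,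
        adjoint_pow_sub_apply h, hAB, show k - (n + 1) = k - 1 - n by omega]
    · rw [if_pos le_rfl, if_neg (by omega), adjointImpulseInput_self, Nat.sub_self, pow_zero,
        one_apply_eq_self, hAB']
    · rw [if_neg (by omega), if_neg (by omega), adjointImpulseInput_eq_zero A B C D w h, map_zero,
        map_zero, add_zero]

theorem systemOperator_adjointImpulse
    (hc : ∀ x v, ‖A x + B v‖ ^ 2 + ‖C x + D v‖ ^ 2 ≤ ‖x‖ ^ 2 + ‖v‖ ^ 2)
    (hAB : ∀ x, A (adjoint A x) + B (adjoint B x) = x)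
    (hAB' : ∀ w, A (adjoint C w) + B (adjoint D w) = 0)
    (hCD : ∀ x, C (adjoint A x) + D (adjoint B x) = 0)
    (hCD' : ∀ w, C (adjoint C w) + D (adjoint D w) = w) (k : ℕ) (w : W) :
    systemOperator A B C D hc (adjointImpulse A B C D k w) = lp.single 2 k w := by
  refine lp.ext <| funext fun n => ?_
  rw [systemOperator_apply, output, adjointImpulse_snd, coe_adjointImpulse_fst,
    state_adjointImpulse hAB hAB', lp.single_apply]
  rcases lt_trichotomy n k with h | rfl | h
  · rw [if_pos h.le, adjointImpulseInput_of_lt A B C D w h, adjoint_pow_sub_apply h, hCD,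
      Pi.single_eq_of_ne h.ne]
  · rw [if_pos le_rfl, adjointImpulseInput_self, Nat.sub_self, pow_zero, one_apply_eq_self, hCD',
      Pi.single_eq_same]
  · rw [if_neg (by omega), adjointImpulseInput_eq_zero A B C D w h, map_zero, map_zero, add_zero,
      Pi.single_eq_of_ne h.ne']

theorem systemOperator_comp_adjoint
    (hc : ∀ x v, ‖A x + B v‖ ^ 2 + ‖C x + D v‖ ^ 2 ≤ ‖x‖ ^ 2 + ‖v‖ ^ 2)
    (hAB : ∀ x, A (adjoint A x) + B (adjoint B x) = x)
    (hAB' : ∀ w, A (adjoint C w) + B (adjoint D w) = 0)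
    (hCD : ∀ x, C (adjoint A x) + D (adjoint B x) = 0)
    (hCD' : ∀ w, C (adjoint C w) + D (adjoint D w) = w) :
    systemOperator A B C D hc ∘L adjoint (systemOperator A B C D hc) = 1 :=
  lp.ext_continuousLinearMap (by norm_num) fun k => ext fun w => by
    simp only [comp_apply, lp.singleContinuousLinearMap_apply, adjoint_systemOperator_single,
      systemOperator_adjointImpulse hc hAB hAB' hCD hCD', one_apply_eq_self]

end Coisometric

section Colligation

variable {A B C D} {S : WithLp 2 (X × V) →L[𝕜] WithLp 2 (X × W)}

theorem adjoint_toLp_of_apply_toLp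
    (hS : ∀ x v, S (WithLp.toLp 2 (x, v)) = WithLp.toLp 2 (A x + B v, C x + D v))
    (x : X) (w : W) :
    adjoint S (WithLp.toLp 2 (x, w)) =
      WithLp.toLp 2 (adjoint A x + adjoint C w, adjoint B x + adjoint D w) := by
  refine ext_inner_left 𝕜 fun u => ?_
  rcases u with ⟨x', v'⟩
  simp only [adjoint_inner_right, hS, WithLp.prod_inner_apply, inner_add_left, inner_add_right]
  ring

theorem norm_sq_add_norm_sq_le_of_comp_adjoint_eq_one
    (hS : ∀ x v, S (WithLp.toLp 2 (x, v)) = WithLp.toLp 2 (A x + B v, C x + D v))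
    (hS₁ : S ∘L adjoint S = 1) (x : X) (v : V) :
    ‖A x + B v‖ ^ 2 + ‖C x + D v‖ ^ 2 ≤ ‖x‖ ^ 2 + ‖v‖ ^ 2 := by
  have h := norm_apply_le_of_comp_adjoint_eq_one S hS₁ (WithLp.toLp 2 (x, v))
  rw [hS] at h
  simpa only [WithLp.prod_norm_sq_eq_of_L2, WithLp.toLp_fst, WithLp.toLp_snd]
    using pow_le_pow_left₀ (norm_nonneg _) h 2

theorem block_relations_of_comp_adjoint_eq_one
    (hS : ∀ x v, S (WithLp.toLp 2 (x, v)) = WithLp.toLp 2 (A x + B v, C x + D v))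
    (hS₁ : S ∘L adjoint S = 1) (x : X) (w : W) :
    A (adjoint A x + adjoint C w) + B (adjoint B x + adjoint D w) = x ∧
      C (adjoint A x + adjoint C w) + D (adjoint B x + adjoint D w) = w := by
  simpa [adjoint_toLp_of_apply_toLp hS, hS] using congr($hS₁ (WithLp.toLp 2 (x, w)))

end Colligation

end Adjoint

end LinearSystem

open LinearSystem in
/-- if `{A, B, C, D}` is a co-isometric system, then the operator
`[T_F, Γ̃_W] : ℓ²(ℕ, V) ⊕ X → ℓ²(ℕ, W)` given on finitely supported sequences by
`(v, x) ↦ (D vₙ + Σ_{i<n} C A^{n-1-i} B vᵢ + C Aⁿ x)ₙ` exists and is a co-isometry. -/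
theorem stmt_5
    {X V W : Type*}
    [NormedAddCommGroup X] [InnerProductSpace ℂ X] [CompleteSpace X]
    [NormedAddCommGroup V] [InnerProductSpace ℂ V] [CompleteSpace V]
    [NormedAddCommGroup W] [InnerProductSpace ℂ W] [CompleteSpace W]
    (A : X →L[ℂ] X) (B : V →L[ℂ] X) (C : X →L[ℂ] W) (D : V →L[ℂ] W)
    (S : WithLp 2 (X × V) →L[ℂ] WithLp 2 (X × W))
    (hS : ∀ (x : X) (v : V),
      S ((WithLp.equiv 2 (X × V)).symm (x, v)) =
        (WithLp.equiv 2 (X × W)).symm (A x + B v, C x + D v))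
    (hScoiso : S.comp S.adjoint = 1) :
    ∃ T : WithLp 2 ((lp (fun _ : ℕ => V) 2) × X) →L[ℂ] lp (fun _ : ℕ => W) 2,
      (∀ (v : ℕ → V) (hfin : Set.Finite (Function.support v)) (hv : Memℓp v 2)
          (x : X) (n : ℕ),
        T ((WithLp.equiv 2 ((lp (fun _ : ℕ => V) 2) × X)).symm (⟨v, hv⟩, x)) n =
          D (v n) + (∑ i ∈ Finset.range n, C ((A ^ (n - 1 - i)) (B (v i)))) +
            C ((A ^ n) x)) ∧
      T.comp T.adjoint = 1 := by
  have hc := norm_sq_add_norm_sq_le_of_comp_adjoint_eq_one hS hScoiso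
  have hblock := block_relations_of_comp_adjoint_eq_one hS hScoiso
  refine ⟨systemOperator A B C D hc, fun v _ hv x n => ?_, systemOperator_comp_adjoint hc
    (fun x => by simpa using (hblock x 0).1) (fun w => by simpa using (hblock 0 w).1)
    (fun x => by simpa using (hblock x 0).2) (fun w => by simpa using (hblock 0 w).2)⟩
  rw [systemOperator_apply, output, state_eq_sum, map_add, map_sum]
  simp only [WithLp.equiv_symm_apply, WithLp.toLp_fst, WithLp.toLp_snd]
  abel
end
end

section
/- Let U and Y be complex Hilbert spaces, F a closed subspace of U, ω = (ω₁, ω₂) : F → Y ⊕ U a contraction, G = U ⊖ F, and let M : ℓ²(ℕ, 𝒟_{ω*}) ⊕ U → ℓ²(ℕ, G) ⊕ ℓ²(ℕ, Y) be the co-isometry whose action on finitely supported sequences d = (d_i) and u ∈ U is given componentwise by: G-part at index n equal to Π_G (ω₂ Π_F)ⁿ u + Σ_{i=0}^{n-1} Π_G (ω₂ Π_F)^{n-1-i} Π_U D_{ω*} d_i, and Y-part at index n equal to ω₁ Π_F (ω₂ Π_F)ⁿ u + Π_Y D_{ω*} d_n + Σ_{i=0}^{n-1} ω₁ Π_F (ω₂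 Π_F)^{n-1-i} Π_U D_{ω*} d_i. If, in addition, ω is an isometry and ω₂ Π_F is pointwise stable, i.e. (ω₂ Π_F)ⁿ u → 0 as n → ∞ for every u ∈ U, then M is unitary. -/
/-!
Since `ω` is an isometry, `ω ω*` is the orthogonal projection onto its range, so the positive
square root `D_{ω*}` of `I - ω ω*` is `I - ω ω*` itself. Hence `D_{ω*}` is the identity on
`𝒟_{ω*}`, and `𝒟_{ω*}` is orthogonal to the range of `ω`.

For a finitely supported input `d` and initial state `u`, `M (d, u)` is the output of the system
`x₀ = u`, `x_{n+1} = ω₂ Π_F x_n + Π_U d_n` with outputs `Π_G x_n` and `ω₁ Π_F x_n + Π_Y d_n`.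
Orthogonality and the isometry of `ω` give the energy balance
`‖outputs_n‖² + ‖x_{n+1}‖² = ‖x_n‖² + ‖d_n‖²`; once `d` stops, `x_n → 0` by stability, so
summing gives `‖M (d, u)‖ = ‖(d, u)‖`. By density `M` is an isometry, and a co-isometry that is
an isometry is unitary.
-/

open scoped ENNReal Topology
open Filter

namespace ContinuousLinearMap
variable {H K : Type*} [NormedAddCommGroup H] [InnerProductSpace ℂ H] [CompleteSpace H]
  [NormedAddCommGroup K] [InnerProductSpace ℂ K] [CompleteSpace K]

theorem isStarProjection_comp_adjoint_of_adjoint_comp_self {V : K →L[ℂ] H}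
    (hV : V.adjoint ∘L V = 1) : IsStarProjection (V ∘L V.adjoint) where
  isIdempotentElem := by
    rw [IsIdempotentElem, mul_def, comp_assoc, ← comp_assoc V.adjoint, hV, one_def, id_comp]
  isSelfAdjoint := by
    rw [IsSelfAdjoint, star_eq_adjoint, adjoint_comp, adjoint_adjoint]

theorem IsPositive.eq_one_sub_comp_adjoint {V : K →L[ℂ] H} (hV : V.adjoint ∘L V = 1)
    {D : H →L[ℂ] H} (hD : D.IsPositive) (hD2 : D ∘L D = 1 - V ∘L V.adjoint) :
    D = 1 - V ∘L V.adjoint := by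
  have hP := (isStarProjection_comp_adjoint_of_adjoint_comp_self hV).one_sub
  refine (CFC.mul_self_eq_mul_self_iff D _ ((nonneg_iff_isPositive D).mpr hD) hP.nonneg).mp ?_
  rw [hP.isIdempotentElem.eq]
  exact hD2

theorem topologicalClosure_range_one_sub_le_ker_adjoint {V : K →L[ℂ] H}
    (hV : V.adjoint ∘L V = 1) :
    (LinearMap.range ((1 - V ∘L V.adjoint : H →L[ℂ] H) : H →ₗ[ℂ] H)).topologicalClosure ≤
      (V.adjoint : H →L[ℂ] K).ker := by
  refine Submodule.topologicalClosure_minimal _ ?_ (isClosed_ker _)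
  rintro _ ⟨v, rfl⟩
  have hVV : V.adjoint (V (V.adjoint v)) = V.adjoint v := by
    rw [← comp_apply, hV, one_apply_eq_self]
  simp [hVV]
end ContinuousLinearMap

section StateTrajectory
variable {R M : Type*} [Semiring R] [AddCommMonoid M] [Module R M] [TopologicalSpace M]

def stateTrajectory (A : M →L[R] M) (u : M) (e : ℕ → M) : ℕ → M
  | 0 => u
  | n + 1 => A (stateTrajectory A u e n) + e n

variable (A : M →L[R] M) (u : M) (e : ℕ → M)

@[simp] lemma stateTrajectory_zero : stateTrajectory A u e 0 = u := rfl

lemma stateTrajectory_succ (n : ℕ) :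
    stateTrajectory A u e (n + 1) = A (stateTrajectory A u e n) + e n := rfl

lemma stateTrajectory_eq_pow_add_sum (n : ℕ) :
    stateTrajectory A u e n = (A ^ n) u + ∑ i ∈ Finset.range n, (A ^ (n - 1 - i)) (e i) := by
  induction n with
  | zero => simp
  | succ n ih =>
    have hpow : ∀ i ∈ Finset.range n, A ((A ^ (n - 1 - i)) (e i)) = (A ^ (n - i)) (e i) := by
      intro i hi
      rw [← mul_apply_eq_comp, ← pow_succ',
        show n - 1 - i + 1 = n - i by simp at hi; omega]
    rw [stateTrajectory_succ, ih, map_add, map_sum, Finset.sum_congr rfl hpow,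
      Finset.sum_range_succ, ← mul_apply_eq_comp, ← pow_succ']
    simp [add_assoc]

lemma stateTrajectory_add_of_forall_ge {N : ℕ} (he : ∀ n, N ≤ n → e n = 0) (k : ℕ) :
    stateTrajectory A u e (N + k) = (A ^ k) (stateTrajectory A u e N) := by
  induction k with
  | zero => simp
  | succ k ih =>
    rw [← add_assoc, stateTrajectory_succ, ih, he _ (by omega), add_zero, pow_succ',
      mul_apply_eq_comp]

lemma tendsto_stateTrajectory_zero (hA : ∀ v, Tendsto (fun n => (A ^ n) v) atTop (𝓝 0))
    {N : ℕ} (he : ∀ n, N ≤ n → e n = 0) :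
    Tendsto (stateTrajectory A u e) atTop (𝓝 0) := by
  rw [← tendsto_add_atTop_iff_nat N]
  simpa only [add_comm _ N, stateTrajectory_add_of_forall_ge A u e he] using
    hA (stateTrajectory A u e N)

end StateTrajectory

lemma hasSum_of_balance {a b x : ℕ → ℝ} {B : ℝ} (ha : ∀ n, 0 ≤ a n)
    (h : ∀ n, a n + x (n + 1) = x n + b n) (hx : Tendsto x atTop (𝓝 0)) (hb : HasSum b B) :
    HasSum a (x 0 + B) := by
  have hpartial : ∀ N, ∑ n ∈ Finset.range N, a n = x 0 - x N + ∑ n ∈ Finset.range N, b n := by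
    intro N
    induction N with
    | zero => simp
    | succ N ih => rw [Finset.sum_range_succ, Finset.sum_range_succ, ih]; linarith [h N]
  rw [hasSum_iff_tendsto_nat_of_nonneg ha, funext hpartial]
  simpa using (tendsto_const_nhds.sub hx).add hb.tendsto_sum_nat

namespace lp
variable {ι : Type*}

lemma hasSum_norm_sq {E : ι → Type*} [∀ i, NormedAddCommGroup (E i)] (f : lp E 2) :
    HasSum (fun i => ‖f i‖ ^ 2) (‖f‖ ^ 2) := by
  simpa using lp.hasSum_norm (p := 2) (by norm_num) f

lemma mem_closure_setOf_support_finite {E : Type*} [NormedAddCommGroup E] {p : ℝ≥0∞}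
    [Fact (1 ≤ p)] (hp : p ≠ ⊤) (f : lp (fun _ : ι => E) p) :
    f ∈ closure {g : lp (fun _ : ι => E) p | (Function.support g).Finite} := by
  classical
  refine mem_closure_of_tendsto (lp.hasSum_single hp f) (Eventually.of_forall fun s => ?_)
  refine s.finite_toSet.subset fun i hi => ?_
  by_contra his
  refine hi ?_
  simp only [lp.coeFn_sum, Finset.sum_apply]
  exact Finset.sum_eq_zero fun j hj => lp.single_apply_ne p j _ (by rintro rfl; exact his hj)
end lp

lemma WithLp.norm_map_of_forall_support_finite {ι E : Type*}
    [NormedAddCommGroup E] {p q : ℝ≥0∞} [Fact (1 ≤ p)] [Fact (1 ≤ q)] (hp : p ≠ ⊤)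
    {V W : Type*} [SeminormedAddCommGroup V] [SeminormedAddCommGroup W]
    {T : WithLp q (lp (fun _ : ι => E) p × V) → W} (hT : Continuous T)
    (h : ∀ c : lp (fun _ : ι => E) p, (Function.support c).Finite →
      ∀ v, ‖T (WithLp.toLp q (c, v))‖ = ‖WithLp.toLp q (c, v)‖)
    (w : WithLp q (lp (fun _ : ι => E) p × V)) : ‖T w‖ = ‖w‖ := by
  have hclosed : IsClosed {x | ‖T x‖ = ‖x‖} := isClosed_eq hT.norm continuous_norm
  have hφ : Continuous fun c : lp (fun _ : ι => E) p => WithLp.toLp q (c, w.snd) :=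
    (WithLp.prod_continuous_toLp q _ _).comp (continuous_id.prodMk continuous_const)
  have := map_mem_closure hφ (lp.mem_closure_setOf_support_finite hp w.fst)
    (t := {x | ‖T x‖ = ‖x‖}) fun c hc => h c hc w.snd
  rwa [hclosed.closure_eq] at this

section Energy
variable {U Y : Type*} [NormedAddCommGroup U] [InnerProductSpace ℂ U]
  [NormedAddCommGroup Y] [InnerProductSpace ℂ Y] {F : Submodule ℂ U} [F.HasOrthogonalProjection]
  {ω₁ : F →L[ℂ] Y} {ω₂ : F →L[ℂ] U} {ω : F →L[ℂ] WithLp 2 (Y × U)}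

lemma norm_sq_output_add_norm_sq_succ
    (hω : ∀ f : F, ω f = (WithLp.equiv 2 (Y × U)).symm (ω₁ f, ω₂ f))
    (hωiso : ∀ f : F, ‖ω f‖ = ‖f‖) (z : U) {d : WithLp 2 (Y × U)}
    (hd : ∀ f : F, inner ℂ (ω f) d = 0) :
    ‖Fᗮ.orthogonalProjectionOnto z‖ ^ 2 + ‖ω₁ (F.orthogonalProjectionOnto z) + d.fst‖ ^ 2
      + ‖ω₂ (F.orthogonalProjectionOnto z) + d.snd‖ ^ 2 = ‖z‖ ^ 2 + ‖d‖ ^ 2 := by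
  set f := F.orthogonalProjectionOnto z
  have hsum : ‖ω₁ f + d.fst‖ ^ 2 + ‖ω₂ f + d.snd‖ ^ 2 = ‖ω f + d‖ ^ 2 := by
    rw [WithLp.prod_norm_sq_eq_of_L2, hω]; rfl
  rw [add_assoc, hsum, norm_add_sq (𝕜 := ℂ), hd f, map_zero, mul_zero, add_zero, hωiso,
    Submodule.norm_sq_eq_add_norm_sq_projection z F]
  ring

lemma hasSum_norm_sq_output
    (hω : ∀ f : F, ω f = (WithLp.equiv 2 (Y × U)).symm (ω₁ f, ω₂ f))
    (hωiso : ∀ f : F, ‖ω f‖ = ‖f‖)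
    (hA : ∀ v, Tendsto (fun n => ((ω₂ ∘L F.orthogonalProjectionOnto) ^ n) v) atTop (𝓝 0))
    (u : U) {d : ℕ → WithLp 2 (Y × U)} (hd : ∀ n (f : F), inner ℂ (ω f) (d n) = 0) {N : ℕ}
    (hN : ∀ n, N ≤ n → d n = 0) {B : ℝ} (hB : HasSum (fun n => ‖d n‖ ^ 2) B) :
    HasSum (fun n =>
      ‖Fᗮ.orthogonalProjectionOnto
          (stateTrajectory (ω₂ ∘L F.orthogonalProjectionOnto) u (fun n => (d n).snd) n)‖ ^ 2 +
        ‖ω₁ (F.orthogonalProjectionOnto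
          (stateTrajectory (ω₂ ∘L F.orthogonalProjectionOnto) u (fun n => (d n).snd) n)) +
          (d n).fst‖ ^ 2) (‖u‖ ^ 2 + B) := by
  set x := stateTrajectory (ω₂ ∘L F.orthogonalProjectionOnto) u (fun n => (d n).snd)
  have hx : Tendsto x atTop (𝓝 0) :=
    tendsto_stateTrajectory_zero _ u _ hA fun n hn => by rw [hN n hn, WithLp.zero_snd]
  exact hasSum_of_balance (x := fun n => ‖x n‖ ^ 2) (fun n => by positivity)
    (fun n => norm_sq_output_add_norm_sq_succ hω hωiso (x n) (hd n))
    (by simpa using hx.norm.pow 2) hB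

lemma norm_sq_add_norm_sq_eq_of_output
    (hω : ∀ f : F, ω f = (WithLp.equiv 2 (Y × U)).symm (ω₁ f, ω₂ f))
    (hωiso : ∀ f : F, ‖ω f‖ = ‖f‖)
    (hA : ∀ v, Tendsto (fun n => ((ω₂ ∘L F.orthogonalProjectionOnto) ^ n) v) atTop (𝓝 0))
    {K : Submodule ℂ (WithLp 2 (Y × U))} (hK : ∀ v ∈ K, ∀ f : F, inner ℂ (ω f) v = 0)
    (c : lp (fun _ : ℕ => K) 2) (hc : (Function.support c).Finite) (u : U)
    {g : lp (fun _ : ℕ => Fᗮ) 2} {y : lp (fun _ : ℕ => Y) 2}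
    (hg : ∀ n, g n = Fᗮ.orthogonalProjectionOnto (stateTrajectory
      (ω₂ ∘L F.orthogonalProjectionOnto) u (fun n => (c n : WithLp 2 (Y × U)).snd) n))
    (hy : ∀ n, y n = ω₁ (F.orthogonalProjectionOnto (stateTrajectory
      (ω₂ ∘L F.orthogonalProjectionOnto) u (fun n => (c n : WithLp 2 (Y × U)).snd) n)) +
        (c n : WithLp 2 (Y × U)).fst) :
    ‖g‖ ^ 2 + ‖y‖ ^ 2 = ‖u‖ ^ 2 + ‖c‖ ^ 2 := by
  obtain ⟨N, hN⟩ := hc.bddAbove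
  have hsupp : ∀ n, N + 1 ≤ n → (c n : WithLp 2 (Y × U)) = 0 := fun n hn => by
    by_contra h
    have := hN (show c n ≠ 0 by simpa using h)
    omega
  have := hasSum_norm_sq_output hω hωiso hA u (fun n => hK _ (c n).2) hsupp (lp.hasSum_norm_sq c)
  exact ((lp.hasSum_norm_sq g).add (lp.hasSum_norm_sq y)).unique (by simpa [hg, hy] using this)
end Energy

theorem stmt_8_general
    {U Y : Type*}
    [NormedAddCommGroup U] [InnerProductSpace ℂ U] [CompleteSpace U]
    [NormedAddCommGroup Y] [InnerProductSpace ℂ Y] [CompleteSpace Y]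
    (F : Submodule ℂ U) [CompleteSpace F]
    (G : Submodule ℂ U) [CompleteSpace G] (hG : G = Fᗮ)
    (ω₁ : F →L[ℂ] Y) (ω₂ : F →L[ℂ] U)
    (ω : F →L[ℂ] WithLp 2 (Y × U))
    (hωdef : ∀ f : F, ω f = (WithLp.equiv 2 (Y × U)).symm (ω₁ f, ω₂ f))
    (Dω : WithLp 2 (Y × U) →L[ℂ] WithLp 2 (Y × U))
    (hDωpos : Dω.IsPositive)
    (hDωsq : Dω.comp Dω = 1 - ω.comp ω.adjoint)
    (𝒟 : Submodule ℂ (WithLp 2 (Y × U))) [CompleteSpace 𝒟]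
    (h𝒟 : 𝒟 = (LinearMap.range (Dω : WithLp 2 (Y × U) →ₗ[ℂ] WithLp 2 (Y × U))).topologicalClosure)
    (M : WithLp 2 ((lp (fun _ : ℕ => 𝒟) 2) × U) →L[ℂ]
        WithLp 2 ((lp (fun _ : ℕ => G) 2) × (lp (fun _ : ℕ => Y) 2)))
    (hM1 : ∀ (d : ℕ → 𝒟) (hfin : Set.Finite (Function.support d)) (hd : Memℓp d 2)
        (u : U) (n : ℕ),
      (WithLp.equiv 2 ((lp (fun _ : ℕ => G) 2) × (lp (fun _ : ℕ => Y) 2))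
          (M ((WithLp.equiv 2 ((lp (fun _ : ℕ => 𝒟) 2) × U)).symm (⟨d, hd⟩, u)))).1 n =
        ((Submodule.orthogonalProjectionOnto G).comp ((ω₂.comp (Submodule.orthogonalProjectionOnto F)) ^ n)) u +
          ∑ i ∈ Finset.range n,
            ((Submodule.orthogonalProjectionOnto G).comp
                ((ω₂.comp (Submodule.orthogonalProjectionOnto F)) ^ (n - 1 - i)))
              (WithLp.equiv 2 (Y × U) (Dω ↑(d i))).2)
    (hM2 : ∀ (d : ℕ → 𝒟) (hfin : Set.Finite (Function.support d)) (hd : Memℓp d 2)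
        (u : U) (n : ℕ),
      (WithLp.equiv 2 ((lp (fun _ : ℕ => G) 2) × (lp (fun _ : ℕ => Y) 2))
          (M ((WithLp.equiv 2 ((lp (fun _ : ℕ => 𝒟) 2) × U)).symm (⟨d, hd⟩, u)))).2 n =
        (ω₁.comp ((Submodule.orthogonalProjectionOnto F).comp
            ((ω₂.comp (Submodule.orthogonalProjectionOnto F)) ^ n))) u +
          (WithLp.equiv 2 (Y × U) (Dω ↑(d n))).1 +
          ∑ i ∈ Finset.range n,
            (ω₁.comp ((Submodule.orthogonalProjectionOnto F).comp
                ((ω₂.comp (Submodule.orthogonalProjectionOnto F)) ^ (n - 1 - i))))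
              (WithLp.equiv 2 (Y × U) (Dω ↑(d i))).2)
    (hMcoiso : M.comp M.adjoint = 1)
    (hωiso : ∀ f : F, ‖ω f‖ = ‖f‖)
    (hstable : ∀ u : U,
      Filter.Tendsto (fun n : ℕ => ((ω₂.comp (Submodule.orthogonalProjectionOnto F)) ^ n) u)
        Filter.atTop (𝓝 0)) :
    M.adjoint.comp M = 1 ∧ M.comp M.adjoint = 1 := by
  subst hG
  have hωV : ω.adjoint ∘L ω = 1 := ω.norm_map_iff_adjoint_comp_self.mp hωiso
  have hD := hDωpos.eq_one_sub_comp_adjoint hωV hDωsq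
  have h𝒟ker : ∀ v ∈ 𝒟, ω.adjoint v = 0 := fun v hv =>
    ContinuousLinearMap.topologicalClosure_range_one_sub_le_ker_adjoint hωV (hD ▸ h𝒟 ▸ hv)
  have h𝒟ω : ∀ v ∈ 𝒟, ∀ f : F, inner ℂ (ω f) v = 0 := fun v hv f => by
    rw [← ContinuousLinearMap.adjoint_inner_right, h𝒟ker v hv, inner_zero_right]
  have hfix : ∀ v ∈ 𝒟, Dω v = v := fun v hv => by simp [hD, h𝒟ker v hv]
  refine ⟨M.norm_map_iff_adjoint_comp_self.mp
    (WithLp.norm_map_of_forall_support_finite (by norm_num) M.continuous fun c hc u => ?_), hMcoiso⟩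
  rw [← sq_eq_sq₀ (norm_nonneg _) (norm_nonneg _), WithLp.prod_norm_sq_eq_of_L2,
    WithLp.prod_norm_sq_eq_of_L2]
  refine (norm_sq_add_norm_sq_eq_of_output hωdef hωiso hstable h𝒟ω c hc u (fun n => ?_)
    (fun n => ?_)).trans (add_comm _ _)
  · have := hM1 c hc (lp.memℓp c) u n
    simp only [hfix _ (c _).2] at this
    rw [stateTrajectory_eq_pow_add_sum, map_add, map_sum]
    exact this
  · have := hM2 c hc (lp.memℓp c) u n
    simp only [hfix _ (c _).2] at this
    rw [stateTrajectory_eq_pow_add_sum, map_add, map_sum, map_add, map_sum]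
    exact this.trans (add_right_comm _ _ _)

/-- if moreover `ω` is an isometry and `ω₂ Π_F` is pointwise stable, then the
Redheffer coefficient matrix `M : ℓ²(ℕ, 𝒟_{ω*}) ⊕ U → ℓ²(ℕ, G) ⊕ ℓ²(ℕ, Y)` is unitary. -/
theorem stmt_8
    {U Y : Type*}
    [NormedAddCommGroup U] [InnerProductSpace ℂ U] [CompleteSpace U]
    [NormedAddCommGroup Y] [InnerProductSpace ℂ Y] [CompleteSpace Y]
    (F : Submodule ℂ U) [CompleteSpace F]
    (G : Submodule ℂ U) [CompleteSpace G] (hG : G = Fᗮ)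
    (ω₁ : F →L[ℂ] Y) (ω₂ : F →L[ℂ] U)
    (ω : F →L[ℂ] WithLp 2 (Y × U))
    (hωdef : ∀ f : F, ω f = (WithLp.equiv 2 (Y × U)).symm (ω₁ f, ω₂ f))
    (hωcontr : ‖ω‖ ≤ 1)
    (Dω : WithLp 2 (Y × U) →L[ℂ] WithLp 2 (Y × U))
    (hDωpos : Dω.IsPositive)
    (hDωsq : Dω.comp Dω = 1 - ω.comp ω.adjoint)
    (𝒟 : Submodule ℂ (WithLp 2 (Y × U))) [CompleteSpace 𝒟]
    (h𝒟 : 𝒟 = (LinearMap.range (Dω : WithLp 2 (Y × U) →ₗ[ℂ] WithLp 2 (Y × U))).topologicalClosure)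
    (M : WithLp 2 ((lp (fun _ : ℕ => 𝒟) 2) × U) →L[ℂ]
        WithLp 2 ((lp (fun _ : ℕ => G) 2) × (lp (fun _ : ℕ => Y) 2)))
    (hM1 : ∀ (d : ℕ → 𝒟) (hfin : Set.Finite (Function.support d)) (hd : Memℓp d 2)
        (u : U) (n : ℕ),
      (WithLp.equiv 2 ((lp (fun _ : ℕ => G) 2) × (lp (fun _ : ℕ => Y) 2))
          (M ((WithLp.equiv 2 ((lp (fun _ : ℕ => 𝒟) 2) × U)).symm (⟨d, hd⟩, u)))).1 n =
        ((Submodule.orthogonalProjectionOnto G).comp ((ω₂.comp (Submodule.orthogonalProjectionOnto F)) ^ n)) u +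
          ∑ i ∈ Finset.range n,
            ((Submodule.orthogonalProjectionOnto G).comp
                ((ω₂.comp (Submodule.orthogonalProjectionOnto F)) ^ (n - 1 - i)))
              (WithLp.equiv 2 (Y × U) (Dω ↑(d i))).2)
    (hM2 : ∀ (d : ℕ → 𝒟) (hfin : Set.Finite (Function.support d)) (hd : Memℓp d 2)
        (u : U) (n : ℕ),
      (WithLp.equiv 2 ((lp (fun _ : ℕ => G) 2) × (lp (fun _ : ℕ => Y) 2))
          (M ((WithLp.equiv 2 ((lp (fun _ : ℕ => 𝒟) 2) × U)).symm (⟨d, hd⟩, u)))).2 n =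
        (ω₁.comp ((Submodule.orthogonalProjectionOnto F).comp
            ((ω₂.comp (Submodule.orthogonalProjectionOnto F)) ^ n))) u +
          (WithLp.equiv 2 (Y × U) (Dω ↑(d n))).1 +
          ∑ i ∈ Finset.range n,
            (ω₁.comp ((Submodule.orthogonalProjectionOnto F).comp
                ((ω₂.comp (Submodule.orthogonalProjectionOnto F)) ^ (n - 1 - i))))
              (WithLp.equiv 2 (Y × U) (Dω ↑(d i))).2)
    (hMcoiso : M.comp M.adjoint = 1)
    (hωiso : ∀ f : F, ‖ω f‖ = ‖f‖)
    (hstable : ∀ u : U,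
      Filter.Tendsto (fun n : ℕ => ((ω₂.comp (Submodule.orthogonalProjectionOnto F)) ^ n) u)
        Filter.atTop (𝓝 0)) :
    M.adjoint.comp M = 1 ∧ M.comp M.adjoint = 1 :=
  stmt_8_general F G hG ω₁ ω₂ ω hωdef Dω hDωpos hDωsq 𝒟 h𝒟 M hM1 hM2 hMcoiso hωiso hstable
end

section
/- Let U and Y be complex Hilbert spaces, F a closed subspace of U, and ω = (ω₁, ω₂) : F → Y ⊕ U a contraction. Let Γ_{Φ_{2,2}} : U → ℓ²(ℕ, Y) be the contraction defined by Γ_{Φ_{2,2}} u = (ω₁ Π_F (ω₂ Π_F)ⁿ u)_{n≥0}. Then Γ_{Φ_{2,2}} is a co-isometry if and only if Π_Y D_{ω*} = 0 and ω₁ Π_F (ω₂ Π_F)ⁿ Π_U D_{ω*} = 0 for every integer n ≥ 0 (equivalently, the Redheffer coefficient Φ_{2,1}(λ) = Π_Y D_{ω*} + λ ω₁ Π_F (I − λ ω₂ Π_F)^{-1} Π_U D_{ω*} vanishes for every λ in the open unit disc). -/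
/-!
Write `A n = ω₁ Π_F (ω₂ Π_F)ⁿ`; then `Γ` is a co-isometry iff `A m (A n)* = δₘₙ`.
Since `D` is self-adjoint with `D² = 1 - ωω*`, `‖D x‖² = ‖x‖² - ‖ω* x‖²`, so `D` kills exactly
the vectors on which `ω*` is isometric. If `Γ` is a co-isometry, `(y, 0)` and `(0, (A n)* y)` are
such vectors, because `ω* (y, 0) = ω₁* y` has the norm of `(A 0)* y` and `ω* (0, (A n)* y)` that
of `(A (n + 1))* y`; the two conditions are the adjoint form of `D (y, 0) = 0` and
`D (0, (A n)* y) = 0`. Conversely, the conditions applied to `D x` give `ω₁ ω* = Π_Y` and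
`A n ω₂ ω* = A n Π_U`, that is `ω₁ ω₁* = 1`, `A n ω₂ ω₁* = 0` and `A n ω₂ ω₂* = A n`, from which
`A m (A n)* = δₘₙ` follows by induction, using `Π_F Π_F* = 1`.
-/

open scoped InnerProductSpace
open ContinuousLinearMap

section

variable {𝕜 E G : Type*} [RCLike 𝕜] [NormedAddCommGroup E] [InnerProductSpace 𝕜 E]
  [NormedAddCommGroup G] [InnerProductSpace 𝕜 G]

section CentralCoeffDef

variable (F : Submodule 𝕜 E) [CompleteSpace F] (ω₁ : F →L[𝕜] G) (ω₂ : F →L[𝕜] E)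

/-- The `n`-th Taylor coefficient `ω₁ Π_F (ω₂ Π_F)ⁿ` of the central solution
`ω₁ Π_F (1 - λ ω₂ Π_F)⁻¹`. -/
noncomputable def centralCoeff (n : ℕ) : E →L[𝕜] G :=
  ω₁ ∘L F.orthogonalProjectionOnto ∘L (ω₂ ∘L F.orthogonalProjectionOnto) ^ n

theorem centralCoeff_zero : centralCoeff F ω₁ ω₂ 0 = ω₁ ∘L F.orthogonalProjectionOnto := by
  simp [centralCoeff, one_def]

theorem centralCoeff_succ (n : ℕ) :
    centralCoeff F ω₁ ω₂ (n + 1) = centralCoeff F ω₁ ω₂ n ∘L ω₂ ∘L F.orthogonalProjectionOnto := by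
  simp only [centralCoeff, pow_succ, mul_def, comp_assoc]

end CentralCoeffDef

variable [CompleteSpace E] [CompleteSpace G]

theorem ContinuousLinearMap.norm_adjoint_apply_of_comp_adjoint_eq_one {A : E →L[𝕜] G}
    (h : A ∘L A.adjoint = 1) (y : G) : ‖A.adjoint y‖ = ‖y‖ :=
  (norm_map_iff_adjoint_comp_self A.adjoint).mpr (by rwa [adjoint_adjoint]) y

theorem IsSelfAdjoint.apply_eq_zero_of_norm_adjoint_apply_eq {S : G →L[𝕜] E} {D : E →L[𝕜] E}
    (hD : IsSelfAdjoint D) (hDsq : D ∘L D = 1 - S ∘L S.adjoint) {x : E} (hx : ‖S.adjoint x‖ = ‖x‖) :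
    D x = 0 := by
  have hS : ‖S.adjoint x‖ ^ 2 = RCLike.re ⟪(S ∘L S.adjoint) x, x⟫_𝕜 := by
    rw [apply_norm_sq_eq_inner_adjoint_left, adjoint_adjoint]
  have hDx : ‖D x‖ ^ 2 = ‖x‖ ^ 2 - ‖S.adjoint x‖ ^ 2 := by
    rw [apply_norm_sq_eq_inner_adjoint_left, hD.adjoint_eq, hDsq, hS, sub_apply, one_apply_eq_self,
      inner_sub_left, map_sub, inner_self_eq_norm_sq]
  rwa [hx, sub_self, sq_eq_zero_iff, norm_eq_zero] at hDx

theorem ContinuousLinearMap.adjoint_apply_single {ι : Type*} [DecidableEq ι]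
    (Γ : E →L[𝕜] lp (fun _ : ι => G) 2) (A : ι → E →L[𝕜] G) (hΓ : ∀ u i, Γ u i = A i u)
    (i : ι) (y : G) : Γ.adjoint (lp.single 2 i y) = (A i).adjoint y :=
  ext_inner_left 𝕜 fun u => by
    rw [adjoint_inner_right, adjoint_inner_right, lp.inner_single_right, hΓ]

theorem ContinuousLinearMap.comp_adjoint_eq_one_iff_of_apply_eq {ι : Type*} [DecidableEq ι]
    (Γ : E →L[𝕜] lp (fun _ : ι => G) 2) (A : ι → E →L[𝕜] G) (hΓ : ∀ u i, Γ u i = A i u) :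
    Γ ∘L Γ.adjoint = 1 ↔ ∀ i j, A i ∘L (A j).adjoint = if i = j then 1 else 0 := by
  have hsingle (i j : ι) (y : G) :
      (Γ ∘L Γ.adjoint) (lp.single 2 j y) i = A i ((A j).adjoint y) := by
    rw [comp_apply, Γ.adjoint_apply_single A hΓ, hΓ]
  constructor
  · intro h i j
    ext y
    have := hsingle i j y
    rw [h, one_apply_eq_self, lp.single_apply, Pi.single_apply] at this
    rw [comp_apply, ← this]
    split_ifs <;> rfl
  · intro h
    have hfix (j : ι) (y : G) : (Γ ∘L Γ.adjoint) (lp.single 2 j y) = lp.single 2 j y := by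
      ext i
      rw [hsingle, lp.single_apply, Pi.single_apply, ← comp_apply, h]
      split_ifs <;> rfl
    ext1 g
    have hg : HasSum (fun i => lp.single 2 i (g i)) g := lp.hasSum_single ENNReal.ofNat_ne_top g
    have := (Γ ∘L Γ.adjoint).hasSum hg
    simp only [hfix] at this
    exact this.unique hg

theorem Submodule.orthogonalProjectionOnto_comp_adjoint (K : Submodule 𝕜 E) [CompleteSpace K] :
    K.orthogonalProjectionOnto ∘L K.orthogonalProjectionOnto.adjoint = 1 := by
  ext v
  simp [Submodule.adjoint_orthogonalProjectionOnto]

section CentralCoeff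

variable {F : Submodule 𝕜 E} [CompleteSpace F] {ω₁ : F →L[𝕜] G} {ω₂ : F →L[𝕜] E}

theorem centralCoeff_comp_adjoint_centralCoeff_zero_zero :
    centralCoeff F ω₁ ω₂ 0 ∘L (centralCoeff F ω₁ ω₂ 0).adjoint = ω₁ ∘L ω₁.adjoint := by
  rw [centralCoeff_zero, adjoint_comp, comp_assoc, ← comp_assoc _ _ ω₁.adjoint,
    F.orthogonalProjectionOnto_comp_adjoint, one_def, id_comp]

theorem centralCoeff_comp_adjoint_centralCoeff_succ_zero (m : ℕ) :
    centralCoeff F ω₁ ω₂ (m + 1) ∘L (centralCoeff F ω₁ ω₂ 0).adjoint =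
      centralCoeff F ω₁ ω₂ m ∘L ω₂ ∘L ω₁.adjoint := by
  rw [centralCoeff_succ, centralCoeff_zero, adjoint_comp]
  simp only [comp_assoc]
  rw [← comp_assoc _ _ ω₁.adjoint, F.orthogonalProjectionOnto_comp_adjoint, one_def, id_comp]

theorem centralCoeff_comp_adjoint_centralCoeff_succ_succ (m n : ℕ) :
    centralCoeff F ω₁ ω₂ (m + 1) ∘L (centralCoeff F ω₁ ω₂ (n + 1)).adjoint =
      centralCoeff F ω₁ ω₂ m ∘L ω₂ ∘L ω₂.adjoint ∘L (centralCoeff F ω₁ ω₂ n).adjoint := by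
  rw [centralCoeff_succ, centralCoeff_succ, adjoint_comp, adjoint_comp]
  simp only [comp_assoc]
  rw [← comp_assoc F.orthogonalProjectionOnto, F.orthogonalProjectionOnto_comp_adjoint, one_def,
    id_comp]

theorem norm_adjoint_centralCoeff_zero_apply (y : G) :
    ‖(centralCoeff F ω₁ ω₂ 0).adjoint y‖ = ‖ω₁.adjoint y‖ := by
  simp [centralCoeff_zero, Submodule.adjoint_orthogonalProjectionOnto]

theorem norm_adjoint_centralCoeff_succ_apply (n : ℕ) (y : G) :
    ‖(centralCoeff F ω₁ ω₂ (n + 1)).adjoint y‖ =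
      ‖ω₂.adjoint ((centralCoeff F ω₁ ω₂ n).adjoint y)‖ := by
  simp [centralCoeff_succ, Submodule.adjoint_orthogonalProjectionOnto]

theorem centralCoeff_comp_adjoint_centralCoeff (h₁ : ω₁ ∘L ω₁.adjoint = 1)
    (h₂ : ∀ n, centralCoeff F ω₁ ω₂ n ∘L ω₂ ∘L ω₁.adjoint = 0)
    (h₃ : ∀ n, centralCoeff F ω₁ ω₂ n ∘L ω₂ ∘L ω₂.adjoint = centralCoeff F ω₁ ω₂ n) (m n : ℕ) :
    centralCoeff F ω₁ ω₂ m ∘L (centralCoeff F ω₁ ω₂ n).adjoint = if m = n then 1 else 0 := by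
  induction m generalizing n with
  | zero =>
    cases n with
    | zero => rw [centralCoeff_comp_adjoint_centralCoeff_zero_zero, h₁, if_pos rfl]
    | succ n =>
      rw [if_neg (Nat.zero_ne_add_one n), ← adjoint_adjoint (centralCoeff F ω₁ ω₂ 0),
        ← adjoint_comp, centralCoeff_comp_adjoint_centralCoeff_succ_zero, h₂, map_zero]
  | succ m ih =>
    cases n with
    | zero =>
      rw [centralCoeff_comp_adjoint_centralCoeff_succ_zero, h₂, if_neg (Nat.add_one_ne_zero m)]
    | succ n =>
      have h₃m := h₃ m
      rw [← comp_assoc] at h₃m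
      rw [centralCoeff_comp_adjoint_centralCoeff_succ_succ, ← comp_assoc, ← comp_assoc, h₃m, ih]
      simp only [Nat.add_right_cancel_iff]

end CentralCoeff

section DefectOfProduct

variable {V : Type*} [NormedAddCommGroup V] [InnerProductSpace 𝕜 V] [CompleteSpace V]
  {D : WithLp 2 (G × E) →L[𝕜] WithLp 2 (G × E)}

theorem IsSelfAdjoint.ofLp_fst_apply_eq_zero (hD : IsSelfAdjoint D)
    (h : ∀ y, D (WithLp.toLp 2 (y, 0)) = 0) (x : WithLp 2 (G × E)) : (D x).ofLp.1 = 0 :=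
  ext_inner_right 𝕜 fun y => by
    have := congrArg (inner 𝕜 x) (h y)
    rw [← adjoint_inner_left, hD.adjoint_eq, WithLp.prod_inner_apply] at this
    simpa using this

theorem IsSelfAdjoint.apply_ofLp_snd_apply_eq_zero (hD : IsSelfAdjoint D) (A : E →L[𝕜] V)
    (h : ∀ v, D (WithLp.toLp 2 (0, A.adjoint v)) = 0) (x : WithLp 2 (G × E)) :
    A (D x).ofLp.2 = 0 :=
  ext_inner_right 𝕜 fun v => by
    have := congrArg (inner 𝕜 x) (h v)
    rw [← adjoint_inner_left, hD.adjoint_eq, WithLp.prod_inner_apply] at this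
    simpa [adjoint_inner_right] using this

end DefectOfProduct

section Colligation

variable {F : Submodule 𝕜 E} [CompleteSpace F] {ω₁ : F →L[𝕜] G} {ω₂ : F →L[𝕜] E}
  {ω : F →L[𝕜] WithLp 2 (G × E)} {D : WithLp 2 (G × E) →L[𝕜] WithLp 2 (G × E)}

theorem adjoint_apply_toLp_of_apply_eq (hω : ∀ f, ω f = WithLp.toLp 2 (ω₁ f, ω₂ f))
    (y : G) (u : E) :
    ω.adjoint (WithLp.toLp 2 (y, u)) = ω₁.adjoint y + ω₂.adjoint u :=
  ext_inner_left 𝕜 fun f => by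
    simp [adjoint_inner_right, hω, inner_add_right]

theorem apply_adjoint_apply_eq_ofLp_fst (hω : ∀ f, ω f = WithLp.toLp 2 (ω₁ f, ω₂ f))
    (hDsq : D ∘L D = 1 - ω ∘L ω.adjoint) (h : ∀ x, (D x).ofLp.1 = 0) (x : WithLp 2 (G × E)) :
    ω₁ (ω.adjoint x) = x.ofLp.1 := by
  have := h (D x)
  rw [← comp_apply, hDsq, sub_apply, one_apply_eq_self, comp_apply, hω] at this
  exact (sub_eq_zero.mp (by simpa using this)).symm

theorem apply_apply_adjoint_apply_eq_apply_ofLp_snd {V : Type*} [NormedAddCommGroup V]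
    [InnerProductSpace 𝕜 V] (hω : ∀ f, ω f = WithLp.toLp 2 (ω₁ f, ω₂ f))
    (hDsq : D ∘L D = 1 - ω ∘L ω.adjoint) (A : E →L[𝕜] V) (h : ∀ x, A (D x).ofLp.2 = 0)
    (x : WithLp 2 (G × E)) : A (ω₂ (ω.adjoint x)) = A x.ofLp.2 := by
  have := h (D x)
  rw [← comp_apply, hDsq, sub_apply, one_apply_eq_self, comp_apply, hω] at this
  exact (sub_eq_zero.mp (by simpa using this)).symm

end Colligation

end

theorem stmt_9_general
    {U Y : Type*}
    [NormedAddCommGroup U] [InnerProductSpace ℂ U] [CompleteSpace U]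
    [NormedAddCommGroup Y] [InnerProductSpace ℂ Y] [CompleteSpace Y]
    (F : Submodule ℂ U) [CompleteSpace F]
    (ω₁ : F →L[ℂ] Y) (ω₂ : F →L[ℂ] U)
    (ω : F →L[ℂ] WithLp 2 (Y × U))
    (hωdef : ∀ f : F, ω f = (WithLp.equiv 2 (Y × U)).symm (ω₁ f, ω₂ f))
    (Dω : WithLp 2 (Y × U) →L[ℂ] WithLp 2 (Y × U))
    (hDωpos : Dω.IsPositive)
    (hDωsq : Dω.comp Dω = 1 - ω.comp ω.adjoint)
    (Γ : U →L[ℂ] lp (fun _ : ℕ => Y) 2)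
    (hΓ : ∀ (u : U) (n : ℕ),
      Γ u n = (ω₁.comp ((F.orthogonalProjection).comp
        ((ω₂.comp (F.orthogonalProjection)) ^ n))) u) :
    Γ.comp Γ.adjoint = 1 ↔
      ((∀ x : WithLp 2 (Y × U), (WithLp.equiv 2 (Y × U) (Dω x)).1 = 0) ∧
        ∀ (n : ℕ) (x : WithLp 2 (Y × U)),
          (ω₁.comp ((F.orthogonalProjection).comp
            ((ω₂.comp (F.orthogonalProjection)) ^ n)))
            (WithLp.equiv 2 (Y × U) (Dω x)).2 = 0) := by
  have hD := hDωpos.isSelfAdjoint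
  have hωadj := adjoint_apply_toLp_of_apply_eq hωdef
  change _ ↔ (∀ x, (Dω x).ofLp.1 = 0) ∧ ∀ n x, centralCoeff F ω₁ ω₂ n (Dω x).ofLp.2 = 0
  rw [Γ.comp_adjoint_eq_one_iff_of_apply_eq (centralCoeff F ω₁ ω₂) hΓ]
  constructor
  · intro h
    have hnorm (n : ℕ) (y : Y) : ‖(centralCoeff F ω₁ ω₂ n).adjoint y‖ = ‖y‖ :=
      norm_adjoint_apply_of_comp_adjoint_eq_one (by rw [h, if_pos rfl]) y
    refine ⟨hD.ofLp_fst_apply_eq_zero fun y => hD.apply_eq_zero_of_norm_adjoint_apply_eq hDωsq ?_,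
      fun n => hD.apply_ofLp_snd_apply_eq_zero _ fun y =>
        hD.apply_eq_zero_of_norm_adjoint_apply_eq hDωsq ?_⟩
    · rw [hωadj, map_zero, add_zero, ← norm_adjoint_centralCoeff_zero_apply, hnorm]
      simp
    · rw [hωadj, map_zero, zero_add, ← norm_adjoint_centralCoeff_succ_apply, hnorm]
      simp [hnorm]
  · rintro ⟨hY, hU⟩
    have hY' := apply_adjoint_apply_eq_ofLp_fst hωdef hDωsq hY
    have hU' n := apply_apply_adjoint_apply_eq_apply_ofLp_snd hωdef hDωsq _ (hU n)
    refine centralCoeff_comp_adjoint_centralCoeff ?_ (fun n => ?_) (fun n => ?_)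
    · ext y
      simpa [hωadj] using hY' (WithLp.toLp 2 (y, 0))
    · ext y
      simpa [hωadj] using hU' n (WithLp.toLp 2 (y, 0))
    · ext u
      simpa [hωadj] using hU' n (WithLp.toLp 2 (0, u))

/-- the operator `Γ_{Φ₂,₂} : U → ℓ²(ℕ, Y)`, `u ↦ (ω₁ Π_F (ω₂ Π_F)ⁿ u)ₙ`, is a
co-isometry iff `Π_Y D_{ω*} = 0` and `ω₁ Π_F (ω₂ Π_F)ⁿ Π_U D_{ω*} = 0` for every `n ≥ 0`
(i.e. the Redheffer coefficient `Φ₂,₁` vanishes identically). -/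
theorem stmt_9
    {U Y : Type*}
    [NormedAddCommGroup U] [InnerProductSpace ℂ U] [CompleteSpace U]
    [NormedAddCommGroup Y] [InnerProductSpace ℂ Y] [CompleteSpace Y]
    (F : Submodule ℂ U) [CompleteSpace F]
    (ω₁ : F →L[ℂ] Y) (ω₂ : F →L[ℂ] U)
    (ω : F →L[ℂ] WithLp 2 (Y × U))
    (hωdef : ∀ f : F, ω f = (WithLp.equiv 2 (Y × U)).symm (ω₁ f, ω₂ f))
    (hωcontr : ‖ω‖ ≤ 1)
    (Dω : WithLp 2 (Y × U) →L[ℂ] WithLp 2 (Y × U))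
    (hDωpos : Dω.IsPositive)
    (hDωsq : Dω.comp Dω = 1 - ω.comp ω.adjoint)
    (Γ : U →L[ℂ] lp (fun _ : ℕ => Y) 2) (hΓnorm : ‖Γ‖ ≤ 1)
    (hΓ : ∀ (u : U) (n : ℕ),
      Γ u n = (ω₁.comp ((F.orthogonalProjection).comp
        ((ω₂.comp (F.orthogonalProjection)) ^ n))) u) :
    Γ.comp Γ.adjoint = 1 ↔
      ((∀ x : WithLp 2 (Y × U), (WithLp.equiv 2 (Y × U) (Dω x)).1 = 0) ∧
        ∀ (n : ℕ) (x : WithLp 2 (Y × U)),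
          (ω₁.comp ((F.orthogonalProjection).comp
            ((ω₂.comp (F.orthogonalProjection)) ^ n)))
            (WithLp.equiv 2 (Y × U) (Dω x)).2 = 0) :=
  stmt_9_general F ω₁ ω₂ ω hωdef Dω hDωpos hDωsq Γ hΓ
end

section
/- Let U and Y be complex Hilbert spaces, F a closed subspace of U, and ω = (ω₁, ω₂) : F → Y ⊕ U a contraction such that ω₁ (Π_F ω₂)ⁿ : F → Y is a co-isometry for every integer n ≥ 0. Then for all integers m, n ≥ 0 and all y, y' ∈ Y: ⟨((Π_F ω₂)*)^m ω₁* y, ((Π_F ω₂)*)ⁿ ω₁* y'⟩ equals ⟨y, y'⟩ if m = n, and equals 0 if m ≠ n. In particular, the subspaces F_n = closure(((Π_F ω₂)*)ⁿ ω₁* Y) of F are mutually orthogonal and each F_n has the same dimension as Y. -/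
/-! Write `T = Π_F ω₂` and `S_n = ω₁ Tⁿ`, so that `((Π_F ω₂)*)ⁿ ω₁* = S_n*`. The contraction
hypothesis iterates to `∑_{j<n} ‖ω₁ Tʲ f‖² + ‖Tⁿ f‖² ≤ ‖f‖²`. Since `S_n` is a co-isometry,
`S_n*` is an isometry and `f = S_n* y` satisfies `‖f‖ = ‖y‖ = ‖S_n f‖ ≤ ‖Tⁿ f‖`, so all the
terms `ω₁ Tʲ S_n* y` with `j < n` vanish. Hence `⟨S_m* y, S_n* y'⟩ = ⟨y, ω₁ Tᵐ S_n* y'⟩` is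
`0` for `m < n` and `⟨y, y'⟩` for `m = n`. -/

open ContinuousLinearMap Finset

namespace Submodule

variable {𝕜 E : Type*} [RCLike 𝕜] [NormedAddCommGroup E] [InnerProductSpace 𝕜 E]

theorem IsOrtho.topologicalClosure {U V : Submodule 𝕜 E} (h : U ⟂ V) :
    U.topologicalClosure ⟂ V.topologicalClosure := by
  have closure_left : ∀ {U V : Submodule 𝕜 E}, U ⟂ V → U.topologicalClosure ⟂ V :=
    fun {_ V} h => isOrtho_iff_le.2 (topologicalClosure_minimal _ h.le V.isClosed_orthogonal)
  exact (closure_left (closure_left h).symm).symm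

end Submodule

namespace ContinuousLinearMap

section Normed

variable {𝕜 E Y : Type*} [NontriviallyNormedField 𝕜]
  [NormedAddCommGroup E] [NormedSpace 𝕜 E] [NormedAddCommGroup Y] [NormedSpace 𝕜 Y]

theorem nonempty_topologicalClosure_range_linearIsometryEquiv [CompleteSpace Y] {u : Y →L[𝕜] E}
    (hu : ∀ y, ‖u y‖ = ‖y‖) :
    Nonempty ((LinearMap.range (u : Y →ₗ[𝕜] E)).topologicalClosure ≃ₗᵢ[𝕜] Y) := by
  let g : Y →ₗᵢ[𝕜] E := ⟨u, hu⟩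
  have hclosed : IsClosed (LinearMap.range (u : Y →ₗ[𝕜] E) : Set E) := by
    rw [LinearMap.coe_range]
    exact g.isometry.isClosedEmbedding.isClosed_range
  exact ⟨(LinearIsometryEquiv.ofEq _ _ hclosed.submodule_topologicalClosure_eq).trans
    g.equivRange.symm⟩

theorem sum_norm_sq_apply_pow_add_norm_sq_pow_le {A : E →L[𝕜] Y} {T : E →L[𝕜] E}
    (hcontr : ∀ f, ‖A f‖ ^ 2 + ‖T f‖ ^ 2 ≤ ‖f‖ ^ 2) (n : ℕ) (f : E) :
    ∑ j ∈ range n, ‖A ((T ^ j) f)‖ ^ 2 + ‖(T ^ n) f‖ ^ 2 ≤ ‖f‖ ^ 2 := by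
  induction n with
  | zero => simp
  | succ n ih =>
    have step := hcontr ((T ^ n) f)
    rw [sum_range_succ, pow_succ' T n, mul_def, comp_apply]
    linarith

end Normed

variable {𝕜 E Y : Type*} [RCLike 𝕜]
  [NormedAddCommGroup E] [InnerProductSpace 𝕜 E] [CompleteSpace E]
  [NormedAddCommGroup Y] [InnerProductSpace 𝕜 Y] [CompleteSpace Y]

theorem adjoint_pow_s11 (T : E →L[𝕜] E) (n : ℕ) : adjoint (T ^ n) = adjoint T ^ n := by
  simpa only [star_eq_adjoint] using star_pow T n

theorem norm_adjoint_apply_of_comp_adjoint_eq_one_s11 {S : E →L[𝕜] Y} (hS : S ∘L adjoint S = 1)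
    (y : Y) : ‖adjoint S y‖ = ‖y‖ :=
  (norm_map_iff_adjoint_comp_self (adjoint S)).2 (by rwa [adjoint_adjoint]) y

theorem adjoint_comp_pow (A : E →L[𝕜] Y) (T : E →L[𝕜] E) (n : ℕ) :
    adjoint (A ∘L T ^ n) = (adjoint T ^ n) ∘L adjoint A := by
  rw [adjoint_comp, adjoint_pow_s11]

variable {A : E →L[𝕜] Y} {T : E →L[𝕜] E}

theorem apply_pow_apply_adjoint_eq_zero (hcontr : ∀ f, ‖A f‖ ^ 2 + ‖T f‖ ^ 2 ≤ ‖f‖ ^ 2)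
    {n : ℕ} (hco : (A ∘L T ^ n) ∘L adjoint (A ∘L T ^ n) = 1) (y : Y) {j : ℕ} (hj : j < n) :
    A ((T ^ j) (adjoint (A ∘L T ^ n) y)) = 0 := by
  set f := adjoint (A ∘L T ^ n) y
  have hf : ‖f‖ = ‖y‖ := norm_adjoint_apply_of_comp_adjoint_eq_one_s11 hco y
  have hAf : A ((T ^ n) f) = y := congr($hco y)
  have hA : ‖y‖ ^ 2 ≤ ‖(T ^ n) f‖ ^ 2 := by
    have := hcontr ((T ^ n) f)
    rw [hAf] at this
    linarith [sq_nonneg ‖T ((T ^ n) f)‖]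
  have hsum : ∑ i ∈ range n, ‖A ((T ^ i) f)‖ ^ 2 = 0 := by
    have := sum_norm_sq_apply_pow_add_norm_sq_pow_le hcontr n f
    rw [hf] at this
    exact le_antisymm (by linarith) (sum_nonneg fun i _ => sq_nonneg _)
  rw [sum_eq_zero_iff_of_nonneg fun i _ => sq_nonneg _] at hsum
  simpa using hsum j (mem_range.2 hj)

theorem inner_adjoint_apply_adjoint_apply_of_le
    (hcontr : ∀ f, ‖A f‖ ^ 2 + ‖T f‖ ^ 2 ≤ ‖f‖ ^ 2)
    (hcoiso : ∀ n : ℕ, (A ∘L T ^ n) ∘L adjoint (A ∘L T ^ n) = 1)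
    {m n : ℕ} (hmn : m ≤ n) (y y' : Y) :
    inner 𝕜 (adjoint (A ∘L T ^ m) y) (adjoint (A ∘L T ^ n) y') =
      if m = n then inner 𝕜 y y' else 0 := by
  rw [adjoint_inner_left, comp_apply]
  rcases hmn.lt_or_eq with hlt | rfl
  · rw [apply_pow_apply_adjoint_eq_zero hcontr (hcoiso n) y' hlt, inner_zero_right, if_neg hlt.ne]
  · simpa using congr(inner 𝕜 y ($(hcoiso m) y'))

theorem inner_adjoint_pow_apply_adjoint_apply
    (hcontr : ∀ f, ‖A f‖ ^ 2 + ‖T f‖ ^ 2 ≤ ‖f‖ ^ 2)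
    (hcoiso : ∀ n : ℕ, (A ∘L T ^ n) ∘L adjoint (A ∘L T ^ n) = 1) (m n : ℕ) (y y' : Y) :
    inner 𝕜 ((adjoint T ^ m) (adjoint A y)) ((adjoint T ^ n) (adjoint A y')) =
      if m = n then inner 𝕜 y y' else 0 := by
  simp only [← comp_apply, ← adjoint_comp_pow]
  rcases le_total m n with hmn | hnm
  · exact inner_adjoint_apply_adjoint_apply_of_le hcontr hcoiso hmn y y'
  · rw [← inner_conj_symm, inner_adjoint_apply_adjoint_apply_of_le hcontr hcoiso hnm y' y]
    simp only [eq_comm (a := n), apply_ite (starRingEnd 𝕜), inner_conj_symm, map_zero]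

end ContinuousLinearMap

theorem stmt_11_general
    {U Y : Type*}
    [NormedAddCommGroup U] [InnerProductSpace ℂ U]
    [NormedAddCommGroup Y] [InnerProductSpace ℂ Y] [CompleteSpace Y]
    (F : Submodule ℂ U) [CompleteSpace F]
    (ω₁ : F →L[ℂ] Y) (ω₂ : F →L[ℂ] U)
    (hcontr : ∀ f : F, ‖ω₁ f‖ ^ 2 + ‖ω₂ f‖ ^ 2 ≤ ‖f‖ ^ 2)
    (hcoiso : ∀ n : ℕ,
      (ω₁.comp ((F.orthogonalProjectionOnto.comp ω₂) ^ n)).comp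
        (ω₁.comp ((F.orthogonalProjectionOnto.comp ω₂) ^ n)).adjoint = 1) :
    (∀ (m n : ℕ) (y y' : Y),
      (inner ℂ (((F.orthogonalProjectionOnto.comp ω₂).adjoint ^ m) (ω₁.adjoint y))
          (((F.orthogonalProjectionOnto.comp ω₂).adjoint ^ n) (ω₁.adjoint y')) : ℂ) =
        if m = n then (inner ℂ y y' : ℂ) else 0) ∧
    (∀ m n : ℕ, m ≠ n →
      ∀ x ∈ (LinearMap.range
          ((((F.orthogonalProjectionOnto.comp ω₂).adjoint ^ m).comp
            ω₁.adjoint : Y →ₗ[ℂ] F))).topologicalClosure,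
      ∀ z ∈ (LinearMap.range
          ((((F.orthogonalProjectionOnto.comp ω₂).adjoint ^ n).comp
            ω₁.adjoint : Y →ₗ[ℂ] F))).topologicalClosure,
        (inner ℂ x z : ℂ) = 0) ∧
    (∀ n : ℕ, Nonempty
      ((LinearMap.range
          ((((F.orthogonalProjectionOnto.comp ω₂).adjoint ^ n).comp
            ω₁.adjoint : Y →ₗ[ℂ] F))).topologicalClosure ≃ₗᵢ[ℂ] Y)) := by
  set T : F →L[ℂ] F := F.orthogonalProjectionOnto.comp ω₂
  have hcontrT : ∀ f, ‖ω₁ f‖ ^ 2 + ‖T f‖ ^ 2 ≤ ‖f‖ ^ 2 := fun f =>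
    calc ‖ω₁ f‖ ^ 2 + ‖T f‖ ^ 2 ≤ ‖ω₁ f‖ ^ 2 + ‖ω₂ f‖ ^ 2 := by
          gcongr; exact F.norm_orthogonalProjectionOnto_apply_le (ω₂ f)
      _ ≤ ‖f‖ ^ 2 := hcontr f
  have hinner := inner_adjoint_pow_apply_adjoint_apply hcontrT hcoiso
  refine ⟨hinner, fun m n hmn => ?_, fun n => ?_⟩
  · refine Submodule.isOrtho_iff_inner_eq.1 (Submodule.IsOrtho.topologicalClosure ?_)
    refine Submodule.isOrtho_iff_inner_eq.2 ?_
    rintro _ ⟨y, rfl⟩ _ ⟨y', rfl⟩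
    exact (hinner m n y y').trans (if_neg hmn)
  · refine nonempty_topologicalClosure_range_linearIsometryEquiv fun y => ?_
    rw [← adjoint_comp_pow]
    exact norm_adjoint_apply_of_comp_adjoint_eq_one_s11 (hcoiso n) y

/-- if every `ω₁ (Π_F ω₂)ⁿ` is a co-isometry, then the vectors
`((Π_F ω₂)*)^m ω₁* y` form mutually orthogonal copies of `Y`: the inner products are
`⟨y, y'⟩` for `m = n` and `0` for `m ≠ n`; in particular the subspaces
`F_n = closure(((Π_F ω₂)*)ⁿ ω₁* Y)` are mutually orthogonal and each is isometrically
isomorphic to `Y` (i.e. has the same dimension as `Y`). -/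
theorem stmt_11
    {U Y : Type*}
    [NormedAddCommGroup U] [InnerProductSpace ℂ U] [CompleteSpace U]
    [NormedAddCommGroup Y] [InnerProductSpace ℂ Y] [CompleteSpace Y]
    (F : Submodule ℂ U) [CompleteSpace F]
    (ω₁ : F →L[ℂ] Y) (ω₂ : F →L[ℂ] U)
    (hcontr : ∀ f : F, ‖ω₁ f‖ ^ 2 + ‖ω₂ f‖ ^ 2 ≤ ‖f‖ ^ 2)
    (hcoiso : ∀ n : ℕ,
      (ω₁.comp ((F.orthogonalProjectionOnto.comp ω₂) ^ n)).comp
        (ω₁.comp ((F.orthogonalProjectionOnto.comp ω₂) ^ n)).adjoint = 1) :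
    (∀ (m n : ℕ) (y y' : Y),
      (inner ℂ (((F.orthogonalProjectionOnto.comp ω₂).adjoint ^ m) (ω₁.adjoint y))
          (((F.orthogonalProjectionOnto.comp ω₂).adjoint ^ n) (ω₁.adjoint y')) : ℂ) =
        if m = n then (inner ℂ y y' : ℂ) else 0) ∧
    (∀ m n : ℕ, m ≠ n →
      ∀ x ∈ (LinearMap.range
          ((((F.orthogonalProjectionOnto.comp ω₂).adjoint ^ m).comp
            ω₁.adjoint : Y →ₗ[ℂ] F))).topologicalClosure,
      ∀ z ∈ (LinearMap.range
          ((((F.orthogonalProjectionOnto.comp ω₂).adjoint ^ n).comp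
            ω₁.adjoint : Y →ₗ[ℂ] F))).topologicalClosure,
        (inner ℂ x z : ℂ) = 0) ∧
    (∀ n : ℕ, Nonempty
      ((LinearMap.range
          ((((F.orthogonalProjectionOnto.comp ω₂).adjoint ^ n).comp
            ω₁.adjoint : Y →ₗ[ℂ] F))).topologicalClosure ≃ₗᵢ[ℂ] Y)) :=
  stmt_11_general F ω₁ ω₂ hcontr hcoiso
end

section
/- Let H₀, H, H' be complex Hilbert spaces, let A : H → H' and T' : H' → H' be contractions, and let R, Q : H₀ → H be isometries satisfying T' A R = A Q. If k ∈ H₀ satisfies ‖A Q k‖ = ‖Q k‖, then ‖A R k‖ = ‖R k‖; that is, if Q k is a norm attaining vector for A, then so is R k. -/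
/-- If `A`, `T'` are contractions, `R`, `Q` isometries with
`T' A R = A Q`, and `Q k` is norm attaining for `A`, then so is `R k`. -/
theorem stmt_16
    {H₀ H H' : Type*}
    [NormedAddCommGroup H₀] [InnerProductSpace ℂ H₀] [CompleteSpace H₀]
    [NormedAddCommGroup H] [InnerProductSpace ℂ H] [CompleteSpace H]
    [NormedAddCommGroup H'] [InnerProductSpace ℂ H'] [CompleteSpace H']
    (A : H →L[ℂ] H') (hA : ‖A‖ ≤ 1)
    (T' : H' →L[ℂ] H') (hT' : ‖T'‖ ≤ 1)
    (R Q : H₀ →L[ℂ] H)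
    (hR : ∀ h : H₀, ‖R h‖ = ‖h‖) (hQ : ∀ h : H₀, ‖Q h‖ = ‖h‖)
    (hcom : T'.comp (A.comp R) = A.comp Q)
    (k : H₀) (hk : ‖A (Q k)‖ = ‖Q k‖) :
    ‖A (R k)‖ = ‖R k‖ := by
  have h1 : A (Q k) = T' (A (R k)) := by
    have := congrArg (fun f : H₀ →L[ℂ] H' => f k) hcom
    simpa using this.symm
  have h2 : ‖k‖ ≤ ‖T' (A (R k))‖ := by
    rw [← h1, hk, hQ]
  have h3 : ‖T' (A (R k))‖ ≤ ‖A (R k)‖ := by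
    calc ‖T' (A (R k))‖ ≤ ‖T'‖ * ‖A (R k)‖ := T'.le_opNorm _
    _ ≤ 1 * ‖A (R k)‖ := by
        exact mul_le_mul_of_nonneg_right hT' (norm_nonneg _)
    _ = ‖A (R k)‖ := one_mul _
  have h4 : ‖A (R k)‖ ≤ ‖R k‖ := by
    calc ‖A (R k)‖ ≤ ‖A‖ * ‖R k‖ := A.le_opNorm _
    _ ≤ 1 * ‖R k‖ := mul_le_mul_of_nonneg_right hA (norm_nonneg _)
    _ = ‖R k‖ := one_mul _
  have h5 : ‖R k‖ = ‖k‖ := hR k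
  linarith
end
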